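/- arXiv:1602.01408 — 11 statements merged into one kernel-verified Lean document; each statement's English description precedes it below -/
import Mathlib

section
/- Let H be a complex Hilbert space and let A, P, Q be bounded linear operators on H with P and Q positive, satisfying A Q A* = A* P A. If Q has dense range, then the kernel of A is contained in the kernel of A*. -/
open scoped ComplexOrder InnerProductSpace
open ContinuousLinearMap

/-!
Testing `A Q A† = A† P A` on `f ∈ ker A` gives `⟪Q (A† f), A† f⟫ = ⟪P (A f), A f⟫ = 0`, and for a
positive operator this forces `Q (A† f) = 0` (write `Q = S²` with `S = √Q`). A self-adjoint
operator with dense range is injective, its kernel being the orthogonal complement of its range;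
hence `A† f = 0`.
-/

namespace ContinuousLinearMap

section Complex

variable {E : Type*} [NormedAddCommGroup E] [InnerProductSpace ℂ E]

theorem isPositive_of_inner_nonneg {T : E →L[ℂ] E} (hT : ∀ x, 0 ≤ ⟪T x, x⟫_ℂ) :
    T.IsPositive :=
  (isPositive_iff_complex T).2 fun x =>
    ⟨(Complex.eq_re_of_ofReal_le (r := 0) (by simpa using hT x)).symm,
      (Complex.nonneg_iff.1 (hT x)).1⟩

theorem IsPositive.apply_eq_zero_of_inner_eq_zero [CompleteSpace E] {T : E →L[ℂ] E}
    (hT : T.IsPositive) {x : E} (hx : ⟪T x, x⟫_ℂ = 0) : T x = 0 := by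
  have hT₀ : 0 ≤ T := (nonneg_iff_isPositive T).2 hT
  set S := CFC.sqrt T
  have hSS : S * S = T := CFC.sqrt_mul_sqrt_self T hT₀
  have hS : IsSelfAdjoint S := ((nonneg_iff_isPositive S).1 (CFC.sqrt_nonneg T)).isSelfAdjoint
  have hSx : S x = 0 := by
    refine inner_self_eq_zero (𝕜 := ℂ) |>.1 ?_
    rw [← adjoint_inner_left, hS.adjoint_eq, ← mul_apply_eq_comp, hSS, hx]
  rw [← hSS, mul_apply_eq_comp, hSx, map_zero]

end Complex

variable {𝕜 E F : Type*} [RCLike 𝕜] [NormedAddCommGroup E] [InnerProductSpace 𝕜 E]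
  [NormedAddCommGroup F] [InnerProductSpace 𝕜 F] [CompleteSpace E] [CompleteSpace F]

theorem ker_adjoint_eq_bot_of_denseRange {T : E →L[𝕜] F} (hT : DenseRange T) :
    (adjoint T).ker = ⊥ := by
  rw [← orthogonal_range, ← Submodule.topologicalClosure_eq_top_iff,
    ← Submodule.dense_iff_topologicalClosure_eq_top]
  exact hT

end ContinuousLinearMap

theorem kernel_subset_of_denseRange_interrupter_general
    {H : Type*} [NormedAddCommGroup H] [InnerProductSpace ℂ H] [CompleteSpace H]
    (A P Q : H →L[ℂ] H)
    (hQ : ∀ f : H, 0 ≤ (inner ℂ (Q f) f : ℂ))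
    (hAQA : A ∘L Q ∘L adjoint A = adjoint A ∘L P ∘L A)
    (hden : DenseRange Q) :
    LinearMap.ker (A : H →ₗ[ℂ] H) ≤ LinearMap.ker ((adjoint A : H →L[ℂ] H) : H →ₗ[ℂ] H) := by
  intro f (hf : A f = 0)
  have hQpos := isPositive_of_inner_nonneg hQ
  have hinner : ⟪Q (adjoint A f), adjoint A f⟫_ℂ = 0 :=
    calc ⟪Q (adjoint A f), adjoint A f⟫_ℂ = ⟪(A ∘L Q ∘L adjoint A) f, f⟫_ℂ := by
          rw [comp_apply, comp_apply, adjoint_inner_right]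
      _ = ⟪P (A f), A f⟫_ℂ := by
          rw [hAQA, comp_apply, comp_apply, adjoint_inner_left]
      _ = 0 := by rw [hf, inner_zero_right]
  have hQker : Q.ker = ⊥ := hQpos.isSelfAdjoint.adjoint_eq ▸ ker_adjoint_eq_bot_of_denseRange hden
  exact LinearMap.ker_eq_bot'.1 hQker _ (hQpos.apply_eq_zero_of_inner_eq_zero hinner)

/-- If `A Q A* = A* P A` with `P, Q` positive and `Q` has dense
range, then `ker A ⊆ ker A*`. -/
theorem kernel_subset_of_denseRange_interrupter
    {H : Type*} [NormedAddCommGroup H] [InnerProductSpace ℂ H] [CompleteSpace H]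
    (A P Q : H →L[ℂ] H)
    (hP : ∀ f : H, 0 ≤ (inner ℂ (P f) f : ℂ))
    (hQ : ∀ f : H, 0 ≤ (inner ℂ (Q f) f : ℂ))
    (hAQA : A ∘L Q ∘L adjoint A = adjoint A ∘L P ∘L A)
    (hden : DenseRange Q) :
    LinearMap.ker (A : H →ₗ[ℂ] H) ≤ LinearMap.ker ((adjoint A : H →L[ℂ] H) : H →ₗ[ℂ] H) :=
  kernel_subset_of_denseRange_interrupter_general A P Q hQ hAQA hden
end

section
/- Let H be a complex Hilbert space and let A, P, Q be bounded linear operators on H with P and Q positive, satisfying A Q A* = A* P A. If P has dense range, then the kernel of A* is contained in the kernel of A. -/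
open scoped ComplexOrder
open ContinuousLinearMap

/-! `A* P A f = A Q A* f = 0` for `f ∈ ker A*`, so `⟪P (A f), A f⟫ = ⟪A* P A f, f⟫ = 0`, and
positivity of `P` upgrades this to `P (A f) = 0`. Since `P` is self-adjoint, `A f` is then
orthogonal to the range of `P`, which is dense, so `A f = 0`. -/

namespace ContinuousLinearMap

section Complex

variable {H : Type*} [NormedAddCommGroup H] [InnerProductSpace ℂ H]

theorem isPositive_of_forall_inner_nonneg {T : H →L[ℂ] H}
    (hT : ∀ f : H, 0 ≤ (inner ℂ (T f) f : ℂ)) : T.IsPositive :=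
  (isPositive_iff_complex T).2 fun f =>
    ⟨(Complex.eq_re_of_ofReal_le (by rw [Complex.ofReal_zero]; exact hT f)).symm,
      (Complex.nonneg_iff.1 (hT f)).1⟩

/-- Writing `T = S† S`, the hypothesis says `‖S g‖ = 0`. -/
theorem IsPositive.apply_eq_zero_of_inner_apply_self_eq_zero [CompleteSpace H] {T : H →L[ℂ] H}
    (hT : T.IsPositive) {g : H} (hg : (inner ℂ (T g) g : ℂ) = 0) : T g = 0 := by
  obtain ⟨S, rfl⟩ := CStarAlgebra.nonneg_iff_eq_star_mul_self.1 ((nonneg_iff_isPositive T).2 hT)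
  have hSg : S g = 0 := by
    rwa [star_eq_adjoint, mul_def, comp_apply, adjoint_inner_left, inner_self_eq_zero] at hg
  simp [mul_def, hSg]

end Complex

theorem eq_zero_of_adjoint_apply_eq_zero_of_denseRange {𝕜 E F : Type*} [RCLike 𝕜]
    [NormedAddCommGroup E] [InnerProductSpace 𝕜 E] [CompleteSpace E]
    [NormedAddCommGroup F] [InnerProductSpace 𝕜 F] [CompleteSpace F]
    {T : E →L[𝕜] F} (hT : DenseRange T) {x : F} (hx : adjoint T x = 0) : x = 0 :=
  hT.eq_zero_of_inner_right 𝕜 fun y => by rw [← adjoint_inner_right, hx, inner_zero_right]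

end ContinuousLinearMap

theorem kernel_adjoint_subset_of_denseRange_interrupter_general
    {H : Type*} [NormedAddCommGroup H] [InnerProductSpace ℂ H] [CompleteSpace H]
    (A P Q : H →L[ℂ] H)
    (hP : ∀ f : H, 0 ≤ (inner ℂ (P f) f : ℂ))
    (hAQA : A ∘L Q ∘L adjoint A = adjoint A ∘L P ∘L A)
    (hden : DenseRange P) :
    LinearMap.ker (adjoint A : H →ₗ[ℂ] H) ≤ LinearMap.ker (A : H →ₗ[ℂ] H) := by
  intro f (hf : adjoint A f = 0)
  have hPpos := isPositive_of_forall_inner_nonneg hP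
  have hAPA : adjoint A (P (A f)) = 0 := by
    simpa [hf] using (congrArg (· f) hAQA).symm
  have hPAf : P (A f) = 0 := by
    refine hPpos.apply_eq_zero_of_inner_apply_self_eq_zero ?_
    rw [← adjoint_inner_left, hAPA, inner_zero_left]
  refine eq_zero_of_adjoint_apply_eq_zero_of_denseRange hden ?_
  rwa [← star_eq_adjoint, hPpos.isSelfAdjoint.star_eq]

/-- If `A Q A* = A* P A` with `P, Q` positive and `P` has dense
range, then `ker A* ⊆ ker A`. -/
theorem kernel_adjoint_subset_of_denseRange_interrupter
    {H : Type*} [NormedAddCommGroup H] [InnerProductSpace ℂ H] [CompleteSpace H]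
    (A P Q : H →L[ℂ] H)
    (hP : ∀ f : H, 0 ≤ (inner ℂ (P f) f : ℂ))
    (hQ : ∀ f : H, 0 ≤ (inner ℂ (Q f) f : ℂ))
    (hAQA : A ∘L Q ∘L adjoint A = adjoint A ∘L P ∘L A)
    (hden : DenseRange P) :
    LinearMap.ker (adjoint A : H →ₗ[ℂ] H) ≤ LinearMap.ker (A : H →ₗ[ℂ] H) :=
  kernel_adjoint_subset_of_denseRange_interrupter_general A P Q hP hAQA hden
end

section
/- Let H be a complex Hilbert space and let A, P, Q be bounded linear operators on H with P and Q positive, satisfying A Q A* = A* P A. If P is invertible, then A is coposinormal; that is, there exists a positive bounded operator Q' on H with A Q' A* = A* A. -/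
/-!
Write `√P` for the (invertible) square root of `P`. Testing `A Q A* = A* P A` against `f` gives
`‖√P A f‖² = ⟪Q A* f, A* f⟫ ≤ ‖Q‖ ‖A* f‖²`, and `√P` is bounded below, so `‖A f‖ ≤ C ‖A* f‖`.
By Douglas' factorization lemma `A = M A*` for some bounded `M`; then `A* = A M*` and
`A* A = A (M* M) A*`, so `Q' = M* M` works.
-/

open scoped ComplexOrder
open ContinuousLinearMap

theorem ContinuousLinearMap.isPositive_of_forall_inner_nonneg_s3 {H : Type*} [NormedAddCommGroup H]
    [InnerProductSpace ℂ H] {T : H →L[ℂ] H} (hT : ∀ x, 0 ≤ inner ℂ (T x) x) : T.IsPositive := by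
  rw [isPositive_iff_complex]
  exact fun x ↦ ⟨(Complex.eq_re_of_ofReal_le (hT x)).symm, (Complex.nonneg_iff.mp (hT x)).1⟩

/-- Douglas' factorization lemma. -/
theorem ContinuousLinearMap.exists_comp_eq_of_norm_le {𝕜 E F G : Type*} [RCLike 𝕜]
    [NormedAddCommGroup E] [NormedSpace 𝕜 E] [NormedAddCommGroup F] [NormedSpace 𝕜 F]
    [CompleteSpace F] [NormedAddCommGroup G] [InnerProductSpace 𝕜 G] [CompleteSpace G]
    (A : E →L[𝕜] F) (B : E →L[𝕜] G) (C : ℝ) (h : ∀ x, ‖A x‖ ≤ C * ‖B x‖) :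
    ∃ M : G →L[𝕜] F, M ∘L B = A := by
  set K := (LinearMap.range (B : E →ₗ[𝕜] G)).topologicalClosure
  let e : E →ₗ[𝕜] K := (B : E →ₗ[𝕜] G).codRestrict K fun x ↦
    (LinearMap.range (B : E →ₗ[𝕜] G)).le_topologicalClosure (LinearMap.mem_range_self _ x)
  have he : DenseRange e := by
    rw [DenseRange, Subtype.dense_iff, ← Set.range_comp]
    exact (LinearMap.range (B : E →ₗ[𝕜] G)).topologicalClosure_coe.le
  -- extend `B x ↦ A x` by continuity to `K`, and by zero on `Kᗮ`
  refine ⟨(A : E →ₗ[𝕜] F).extendOfNorm e ∘L K.orthogonalProjectionOnto, ?_⟩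
  ext x
  have hx : K.orthogonalProjectionOnto (B x) = e x :=
    K.orthogonalProjectionOnto_mem_subspace_eq_self (e x)
  simp only [comp_apply, hx]
  exact LinearMap.extendOfNorm_eq he ⟨C, h⟩ x

section StrictlyPositive

variable {H : Type*} [NormedAddCommGroup H] [InnerProductSpace ℂ H] [CompleteSpace H]

theorem IsStrictlyPositive.exists_norm_sq_le_re_inner {P : H →L[ℂ] H}
    (hP : IsStrictlyPositive P) :
    ∃ C, 0 ≤ C ∧ ∀ x, ‖x‖ ^ 2 ≤ C * RCLike.re (inner ℂ (P x) x) := by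
  obtain ⟨u, hu⟩ := hP.isUnit_cfcSqrt
  have hsa : IsSelfAdjoint (CFC.sqrt P) := (CFC.sqrt_nonneg P).isSelfAdjoint
  refine ⟨‖(↑u⁻¹ : H →L[ℂ] H)‖ ^ 2, by positivity, fun x ↦ ?_⟩
  have hx : ‖x‖ ≤ ‖(↑u⁻¹ : H →L[ℂ] H)‖ * ‖CFC.sqrt P x‖ := by
    calc ‖x‖ = ‖(↑u⁻¹ : H →L[ℂ] H) ((u : H →L[ℂ] H) x)‖ := by
          rw [← mul_apply_eq_comp, u.inv_mul, one_apply_eq_self]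
      _ ≤ _ := by rw [hu]; exact le_opNorm _ _
  have hsqrt : ‖CFC.sqrt P x‖ ^ 2 = RCLike.re (inner ℂ (P x) x) := by
    have hPx : P x = CFC.sqrt P (CFC.sqrt P x) := by
      rw [← mul_apply_eq_comp, CFC.sqrt_mul_sqrt_self P hP.nonneg]
    rw [hPx, ← hsa.adjoint_eq, adjoint_inner_left, hsa.adjoint_eq, inner_self_eq_norm_sq]
  calc ‖x‖ ^ 2 ≤ (‖(↑u⁻¹ : H →L[ℂ] H)‖ * ‖CFC.sqrt P x‖) ^ 2 := by gcongr
    _ = _ := by rw [mul_pow, hsqrt]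

theorem exists_norm_le_mul_norm_of_adjoint_comp_comp_eq {E G : Type*}
    [NormedAddCommGroup E] [InnerProductSpace ℂ E] [CompleteSpace E]
    [NormedAddCommGroup G] [InnerProductSpace ℂ G] [CompleteSpace G]
    (S : E →L[ℂ] H) (T : E →L[ℂ] G) {P : H →L[ℂ] H} (Q : G →L[ℂ] G)
    (hP : IsStrictlyPositive P) (h : adjoint S ∘L P ∘L S = adjoint T ∘L Q ∘L T) :
    ∃ C, ∀ x, ‖S x‖ ≤ C * ‖T x‖ := by
  obtain ⟨C, hC₀, hC⟩ := hP.exists_norm_sq_le_re_inner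
  refine ⟨√(C * ‖Q‖), fun x ↦ ?_⟩
  have hform : inner ℂ (P (S x)) (S x) = inner ℂ (Q (T x)) (T x) := by
    rw [← adjoint_inner_left, ← adjoint_inner_left T]
    exact congrArg (inner ℂ · x) (congrArg (· x) h)
  have hsq : ‖S x‖ ^ 2 ≤ (C * ‖Q‖) * ‖T x‖ ^ 2 := by
    calc ‖S x‖ ^ 2 ≤ C * RCLike.re (inner ℂ (Q (T x)) (T x)) := hform ▸ hC (S x)
      _ ≤ C * (‖Q (T x)‖ * ‖T x‖) := by
          gcongr
          exact (RCLike.re_le_norm _).trans (norm_inner_le_norm _ _)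
      _ ≤ C * (‖Q‖ * ‖T x‖ * ‖T x‖) := by gcongr; exact le_opNorm _ _
      _ = _ := by ring
  apply le_of_pow_le_pow_left₀ two_ne_zero (by positivity)
  rwa [mul_pow, Real.sq_sqrt (by positivity)]

end StrictlyPositive

theorem coposinormal_of_invertible_interrupter_general
    {H : Type*} [NormedAddCommGroup H] [InnerProductSpace ℂ H] [CompleteSpace H]
    (A P Q : H →L[ℂ] H)
    (hP : ∀ f : H, 0 ≤ (inner ℂ (P f) f : ℂ))
    (hAQA : A ∘L Q ∘L adjoint A = adjoint A ∘L P ∘L A)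
    (hPinv : IsUnit P) :
    ∃ Q' : H →L[ℂ] H, (∀ f : H, 0 ≤ (inner ℂ (Q' f) f : ℂ)) ∧
      A ∘L Q' ∘L adjoint A = adjoint A ∘L A := by
  have hP' : IsStrictlyPositive P := IsStrictlyPositive.iff_of_unital.mpr
    ⟨(nonneg_iff_isPositive P).mpr (isPositive_of_forall_inner_nonneg_s3 hP), hPinv⟩
  obtain ⟨C, hC⟩ := exists_norm_le_mul_norm_of_adjoint_comp_comp_eq A (adjoint A) Q hP'
    (by rw [adjoint_adjoint]; exact hAQA.symm)
  obtain ⟨M, hM⟩ := exists_comp_eq_of_norm_le A (adjoint A) C hC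
  have hM' : A ∘L adjoint M = adjoint A := by
    simpa only [adjoint_comp, adjoint_adjoint] using congrArg adjoint hM
  refine ⟨adjoint M ∘L M, (isPositive_adjoint_comp_self M).inner_nonneg_left, ?_⟩
  calc A ∘L (adjoint M ∘L M) ∘L adjoint A = (A ∘L adjoint M) ∘L (M ∘L adjoint A) := by
        simp only [comp_assoc]
    _ = adjoint A ∘L A := by rw [hM', hM]

/-- If `A Q A* = A* P A` with `P, Q` positive and `P` invertible,
then `A` is coposinormal: there is a positive `Q'` with `A Q' A* = A* A`. -/
theorem coposinormal_of_invertible_interrupter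
    {H : Type*} [NormedAddCommGroup H] [InnerProductSpace ℂ H] [CompleteSpace H]
    (A P Q : H →L[ℂ] H)
    (hP : ∀ f : H, 0 ≤ (inner ℂ (P f) f : ℂ))
    (hQ : ∀ f : H, 0 ≤ (inner ℂ (Q f) f : ℂ))
    (hAQA : A ∘L Q ∘L adjoint A = adjoint A ∘L P ∘L A)
    (hPinv : IsUnit P) :
    ∃ Q' : H →L[ℂ] H, (∀ f : H, 0 ≤ (inner ℂ (Q' f) f : ℂ)) ∧
      A ∘L Q' ∘L adjoint A = adjoint A ∘L A :=
  coposinormal_of_invertible_interrupter_general A P Q hP hAQA hPinv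
end

section
/- Let H be a complex Hilbert space and let A, P, Q be bounded linear operators on H with P and Q positive, satisfying A Q A* = A* P A. If Q ≥ I ≥ P ≥ 0 (i.e., Q − I and I − P are positive operators), then A is hyponormal; that is, ⟨(A*A − AA*) f, f⟩ ≥ 0 for all f ∈ H. -/
/-!
Evaluate the form of `A Q A* = A* P A` at `f`: it says `⟨Q A* f, A* f⟩ = ⟨P A f, A f⟩`.
Since `Q ≥ I ≥ P`, this squeezes `‖A* f‖² ≤ ⟨Q A* f, A* f⟩ = ⟨P A f, A f⟩ ≤ ‖A f‖²`,
which is the hyponormality inequality.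
-/

open scoped ComplexOrder
open ContinuousLinearMap

section

variable {𝕜 E F : Type*} [RCLike 𝕜]
  [NormedAddCommGroup E] [InnerProductSpace 𝕜 E] [CompleteSpace E]
  [NormedAddCommGroup F] [InnerProductSpace 𝕜 F] [CompleteSpace F]

theorem inner_comp_comp_adjoint_apply_self (B : E →L[𝕜] F) (T : E →L[𝕜] E) (f : F) :
    inner 𝕜 ((B ∘L T ∘L adjoint B) f) f = inner 𝕜 (T (adjoint B f)) (adjoint B f) := by
  rw [comp_apply, comp_apply, ← adjoint_inner_right]

theorem inner_adjoint_comp_comp_apply_self (B : E →L[𝕜] F) (T : F →L[𝕜] F) (f : E) :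
    inner 𝕜 ((adjoint B ∘L T ∘L B) f) f = inner 𝕜 (T (B f)) (B f) := by
  rw [comp_apply, comp_apply, adjoint_inner_left]

end

theorem inner_apply_self_le_of_inner_sub_nonneg {𝕜 E : Type*} [RCLike 𝕜]
    [NormedAddCommGroup E] [InnerProductSpace 𝕜 E] {S T : E →L[𝕜] E} {x : E}
    (h : 0 ≤ inner 𝕜 ((S - T) x) x) : inner 𝕜 (T x) x ≤ inner 𝕜 (S x) x := by
  rwa [sub_apply, inner_sub_left, sub_nonneg] at h

theorem hyponormal_of_interrupter_pair_squeeze_general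
    {H : Type*} [NormedAddCommGroup H] [InnerProductSpace ℂ H] [CompleteSpace H]
    (A P Q : H →L[ℂ] H)
    (hAQA : A ∘L Q ∘L adjoint A = adjoint A ∘L P ∘L A)
    (hQI : ∀ f : H, 0 ≤ (inner ℂ ((Q - 1) f) f : ℂ))
    (hIP : ∀ f : H, 0 ≤ (inner ℂ ((1 - P) f) f : ℂ)) :
    ∀ f : H, 0 ≤ (inner ℂ ((adjoint A ∘L A - A ∘L adjoint A) f) f : ℂ) := by
  intro f
  have hQP : inner ℂ (Q (adjoint A f)) (adjoint A f) = inner ℂ (P (A f)) (A f) := by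
    rw [← inner_comp_comp_adjoint_apply_self, hAQA, inner_adjoint_comp_comp_apply_self]
  rw [sub_apply, inner_sub_left, sub_nonneg, comp_apply, comp_apply, adjoint_inner_left,
    ← adjoint_inner_right]
  calc inner ℂ (adjoint A f) (adjoint A f)
      ≤ inner ℂ (Q (adjoint A f)) (adjoint A f) := by
        simpa using inner_apply_self_le_of_inner_sub_nonneg (hQI (adjoint A f))
    _ = inner ℂ (P (A f)) (A f) := hQP
    _ ≤ inner ℂ (A f) (A f) := by simpa using inner_apply_self_le_of_inner_sub_nonneg (hIP (A f))

/-- If `A Q A* = A* P A` with `Q ≥ I ≥ P ≥ 0`, then `A` is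
hyponormal: `⟨(A*A − AA*) f, f⟩ ≥ 0` for all `f`. -/
theorem hyponormal_of_interrupter_pair_squeeze
    {H : Type*} [NormedAddCommGroup H] [InnerProductSpace ℂ H] [CompleteSpace H]
    (A P Q : H →L[ℂ] H)
    (hP : ∀ f : H, 0 ≤ (inner ℂ (P f) f : ℂ))
    (hQ : ∀ f : H, 0 ≤ (inner ℂ (Q f) f : ℂ))
    (hAQA : A ∘L Q ∘L adjoint A = adjoint A ∘L P ∘L A)
    (hQI : ∀ f : H, 0 ≤ (inner ℂ ((Q - 1) f) f : ℂ))
    (hIP : ∀ f : H, 0 ≤ (inner ℂ ((1 - P) f) f : ℂ)) :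
    ∀ f : H, 0 ≤ (inner ℂ ((adjoint A ∘L A - A ∘L adjoint A) f) f : ℂ) :=
  hyponormal_of_interrupter_pair_squeeze_general A P Q hAQA hQI hIP
end

section
/- For every real number α > −1, there exists a bounded linear operator C on ℓ² whose matrix entries with respect to the standard orthonormal basis are ⟨C e_j, e_i⟩ = 1/(i+1+α) for 0 ≤ j ≤ i and 0 for j > i. -/
/-!
The matrix is that of `x ↦ (w i * ∑_{j ≤ i} x j)_i` with `w i = 1/(i+1+α)`, and
`w i ≤ M/(i+1)` for a constant `M` because `α > -1`. So it suffices that such weighted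
Cesàro operators are bounded, which reduces to the discrete Hardy inequality
`∑ (mean of a_0, …, a_n)² ≤ 4 ∑ a_n²`. For the means `b_n`, writing
`a_{n+1} = (n+2) b_{n+1} - (n+1) b_n` gives `b_{n+1}² - 2 a_{n+1} b_{n+1} ≤ (n+1) b_n² - (n+2) b_{n+1}²`,
which telescopes to `∑ b_n² ≤ 2 ∑ a_n b_n`; Cauchy–Schwarz then yields Hardy's inequality.
-/

open Finset
open scoped ENNReal

/-- The standard orthonormal basis vectors of `ℓ² = ℓ²(ℕ, ℂ)`. -/
noncomputable def e (n : ℕ) : lp (fun _ : ℕ => ℂ) 2 := lp.single 2 n 1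

noncomputable def cesaroMean (a : ℕ → ℝ) (n : ℕ) : ℝ := (∑ j ∈ range (n + 1), a j) / (n + 1)

lemma cesaroMean_zero (a : ℕ → ℝ) : cesaroMean a 0 = a 0 := by
  simp [cesaroMean]

lemma succ_mul_cesaroMean (a : ℕ → ℝ) (n : ℕ) :
    ((n : ℝ) + 1) * cesaroMean a n = ∑ j ∈ range (n + 1), a j := by
  rw [cesaroMean, mul_div_cancel₀ _ (by positivity)]

lemma cesaroMean_succ_sq_sub_le (a : ℕ → ℝ) (n : ℕ) :
    cesaroMean a (n + 1) ^ 2 - 2 * a (n + 1) * cesaroMean a (n + 1) ≤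
      ((n : ℝ) + 1) * cesaroMean a n ^ 2 - ((n : ℝ) + 2) * cesaroMean a (n + 1) ^ 2 := by
  have ha : a (n + 1) = ((n : ℝ) + 2) * cesaroMean a (n + 1) - ((n : ℝ) + 1) * cesaroMean a n := by
    have h := succ_mul_cesaroMean a (n + 1)
    rw [sum_range_succ, ← succ_mul_cesaroMean] at h
    push_cast at h
    linarith
  -- the difference of the two sides is `(n + 1) (b_n - b_{n+1})²`
  rw [ha]
  nlinarith [mul_nonneg (by positivity : (0 : ℝ) ≤ (n : ℝ) + 1)
    (sq_nonneg (cesaroMean a n - cesaroMean a (n + 1)))]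

lemma sum_range_succ_cesaroMean_sq_sub_le (a : ℕ → ℝ) (N : ℕ) :
    ∑ n ∈ range (N + 1), (cesaroMean a n ^ 2 - 2 * a n * cesaroMean a n) ≤
      -(((N : ℝ) + 1) * cesaroMean a N ^ 2) := by
  induction N with
  | zero => simp only [zero_add, sum_range_one, cesaroMean_zero]; push_cast; linarith
  | succ N ih =>
    rw [sum_range_succ]
    have := cesaroMean_succ_sq_sub_le a N
    push_cast
    linarith

lemma sum_cesaroMean_sq_le_two_mul_sum (a : ℕ → ℝ) (N : ℕ) :
    ∑ n ∈ range N, cesaroMean a n ^ 2 ≤ 2 * ∑ n ∈ range N, a n * cesaroMean a n := by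
  cases N with
  | zero => simp
  | succ N =>
    have h := sum_range_succ_cesaroMean_sq_sub_le a N
    simp only [sum_sub_distrib, mul_assoc, ← mul_sum] at h
    nlinarith [sq_nonneg (cesaroMean a N)]

theorem sum_cesaroMean_sq_le (a : ℕ → ℝ) (N : ℕ) :
    ∑ n ∈ range N, cesaroMean a n ^ 2 ≤ 4 * ∑ n ∈ range N, a n ^ 2 := by
  set P := ∑ n ∈ range N, cesaroMean a n ^ 2
  set Q := ∑ n ∈ range N, a n ^ 2
  set R := ∑ n ∈ range N, a n * cesaroMean a n
  have hPR : P ≤ 2 * R := sum_cesaroMean_sq_le_two_mul_sum a N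
  have hRQP : R ^ 2 ≤ Q * P := sum_mul_sq_le_sq_mul_sq _ _ _
  have hP : 0 ≤ P := sum_nonneg fun _ _ => sq_nonneg _
  have hPP : P ^ 2 ≤ (2 * R) ^ 2 := pow_le_pow_left₀ hP hPR 2
  rcases hP.eq_or_lt with h | h
  · rw [← h]; positivity
  · nlinarith

section WeightedCesaro

variable {𝕜 : Type*} [NormedField 𝕜]

def weightedCesaro (w x : ℕ → 𝕜) (i : ℕ) : 𝕜 := w i * ∑ j ∈ range (i + 1), x j

variable {w : ℕ → 𝕜} {M : ℝ}

lemma norm_weightedCesaro_le (hw : ∀ i, ‖w i‖ ≤ M / (i + 1)) (x : ℕ → 𝕜) (i : ℕ) :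
    ‖weightedCesaro w x i‖ ≤ M * cesaroMean (fun n => ‖x n‖) i := by
  calc ‖weightedCesaro w x i‖ ≤ M / (i + 1) * ∑ j ∈ range (i + 1), ‖x j‖ := by
        rw [weightedCesaro, norm_mul]
        exact mul_le_mul (hw i) (norm_sum_le _ _) (norm_nonneg _)
          ((norm_nonneg _).trans (hw i))
    _ = M * cesaroMean (fun n => ‖x n‖) i := by rw [cesaroMean]; ring

lemma sum_norm_sq_le_norm_sq (x : lp (fun _ : ℕ => 𝕜) 2) (s : Finset ℕ) :
    ∑ i ∈ s, ‖x i‖ ^ 2 ≤ ‖x‖ ^ 2 := by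
  have h := lp.sum_rpow_le_norm_rpow (p := 2) (by norm_num) x s
  simp only [ENNReal.toReal_ofNat, Real.rpow_two] at h
  exact h

lemma sum_norm_weightedCesaro_sq_le (hw : ∀ i, ‖w i‖ ≤ M / (i + 1))
    (x : lp (fun _ : ℕ => 𝕜) 2) (s : Finset ℕ) :
    ∑ i ∈ s, ‖weightedCesaro w x i‖ ^ 2 ≤ (2 * M * ‖x‖) ^ 2 := by
  have hsub : s ⊆ range (s.sup id).succ := subset_range_sup_succ s
  calc ∑ i ∈ s, ‖weightedCesaro w x i‖ ^ 2
      ≤ ∑ i ∈ range (s.sup id).succ, ‖weightedCesaro w x i‖ ^ 2 :=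
        sum_le_sum_of_subset_of_nonneg hsub fun _ _ _ => by positivity
    _ ≤ ∑ i ∈ range (s.sup id).succ, (M * cesaroMean (fun n => ‖x n‖) i) ^ 2 :=
        sum_le_sum fun i _ =>
          pow_le_pow_left₀ (norm_nonneg _) (norm_weightedCesaro_le hw x i) 2
    _ = M ^ 2 * ∑ i ∈ range (s.sup id).succ, cesaroMean (fun n => ‖x n‖) i ^ 2 := by
        rw [mul_sum]; simp only [mul_pow]
    _ ≤ M ^ 2 * (4 * ‖x‖ ^ 2) := by
        gcongr
        exact (sum_cesaroMean_sq_le _ _).trans (by gcongr; exact sum_norm_sq_le_norm_sq x _)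
    _ = (2 * M * ‖x‖) ^ 2 := by ring

lemma sum_norm_weightedCesaro_rpow_le (hw : ∀ i, ‖w i‖ ≤ M / (i + 1))
    (x : lp (fun _ : ℕ => 𝕜) 2) (s : Finset ℕ) :
    ∑ i ∈ s, ‖weightedCesaro w x i‖ ^ (2 : ℝ≥0∞).toReal ≤ (2 * M * ‖x‖) ^ (2 : ℝ≥0∞).toReal := by
  simpa [Real.rpow_two] using sum_norm_weightedCesaro_sq_le hw x s

lemma memℓp_weightedCesaro (hw : ∀ i, ‖w i‖ ≤ M / (i + 1)) (x : lp (fun _ : ℕ => 𝕜) 2) :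
    Memℓp (weightedCesaro w x) 2 :=
  memℓp_gen' (sum_norm_weightedCesaro_rpow_le hw x)

noncomputable def weightedCesaroCLM (w : ℕ → 𝕜) (M : ℝ) (hw : ∀ i, ‖w i‖ ≤ M / (i + 1)) :
    lp (fun _ : ℕ => 𝕜) 2 →L[𝕜] lp (fun _ : ℕ => 𝕜) 2 :=
  LinearMap.mkContinuous
    { toFun := fun x => ⟨weightedCesaro w x, memℓp_weightedCesaro hw x⟩
      map_add' := fun x y => lp.ext <| funext fun i => by
        simp only [weightedCesaro, lp.coeFn_add, Pi.add_apply, sum_add_distrib, mul_add]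
      map_smul' := fun c x => lp.ext <| funext fun i => by
        simp only [weightedCesaro, lp.coeFn_smul, Pi.smul_apply, smul_eq_mul, ← mul_sum, RingHom.id_apply]
        ring }
    (2 * M)
    fun x => lp.norm_le_of_forall_sum_le (by norm_num)
      (mul_nonneg (mul_nonneg zero_le_two ((norm_nonneg _).trans (by simpa using hw 0)))
        (norm_nonneg x))
      (sum_norm_weightedCesaro_rpow_le hw x)

lemma weightedCesaroCLM_apply (hw : ∀ i, ‖w i‖ ≤ M / (i + 1)) (x : lp (fun _ : ℕ => 𝕜) 2)
    (i : ℕ) : weightedCesaroCLM w M hw x i = w i * ∑ j ∈ range (i + 1), x j :=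
  rfl

end WeightedCesaro

lemma succ_mul_min_le {α t : ℝ} (ht : 0 ≤ t) : (t + 1) * min 1 (1 + α) ≤ t + 1 + α := by
  rcases le_total 0 α with h | h
  · nlinarith [min_le_left 1 (1 + α)]
  · nlinarith [min_le_right 1 (1 + α)]

lemma norm_inv_add_le {α : ℝ} (hα : α > -1) (i : ℕ) :
    ‖(((1 / ((i : ℝ) + 1 + α)) : ℝ) : ℂ)‖ ≤ (min 1 (1 + α))⁻¹ / (i + 1) := by
  have hmin : 0 < min 1 (1 + α) := lt_min one_pos (by linarith)
  have hi : 0 < (i : ℝ) + 1 + α := by linarith [(Nat.cast_nonneg i : (0 : ℝ) ≤ i)]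
  rw [Complex.norm_real, Real.norm_eq_abs, abs_of_pos (one_div_pos.2 hi), inv_div_left, ← one_div]
  exact one_div_le_one_div_of_le (by positivity) (succ_mul_min_le (Nat.cast_nonneg i))

/-- For every `α > -1` there is a bounded operator `C` on `ℓ²`
with matrix entries `⟨C e_j, e_i⟩ = 1/(i+1+α)` for `j ≤ i` and `0` for `j > i`
(the generalized Cesàro operator of order one). -/
theorem exists_generalized_cesaro_order_one (α : ℝ) (hα : α > -1) :
    ∃ C : lp (fun _ : ℕ => ℂ) 2 →L[ℂ] lp (fun _ : ℕ => ℂ) 2,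
      ∀ i j : ℕ, (inner ℂ (e i) (C (e j)) : ℂ) =
        if j ≤ i then ((1 / ((i : ℝ) + 1 + α) : ℝ) : ℂ) else 0 := by
  refine ⟨weightedCesaroCLM _ _ (norm_inv_add_le hα), fun i j => ?_⟩
  have hsum : ∑ k ∈ range (i + 1), (e j : ℕ → ℂ) k = if j ≤ i then 1 else 0 := by
    simp [e, lp.single_apply, Pi.single_apply]
  rw [e, lp.inner_single_left, weightedCesaroCLM_apply, hsum]
  split_ifs <;> simp [RCLike.inner_apply]
end

section
/- Let α > −1 be a real number and let C = (C^(α),1) be the generalized Cesàro operator of order one on ℓ². Let Q be the diagonal operator diag{1+α, 1, 1, 1, ...} and let P be the diagonal operator diag{(n+1+α)/(n+2+α) : n = 0, 1, 2, ...}. Then C Q C* = C* P C. -/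
open ContinuousLinearMap

/-!
Both sides are compared entry by entry in the standard basis, where all entries are real.
The `(i, j)` entry of `C Q C*` is the finite sum `∑_{n ≤ min i j} q_n / ((i+1+α)(j+1+α))`, and
`∑_{n ≤ k} q_n = k+1+α`. The `(i, j)` entry of `C* P C` is `∑_{n ≥ max i j} 1/((n+1+α)(n+2+α))`,
a telescoping series. Both equal `1/(max i j + 1 + α)`.
-/

open Finset Filter

namespace HilbertBasis

variable {ι 𝕜 E : Type*} [RCLike 𝕜] [NormedAddCommGroup E] [InnerProductSpace 𝕜 E]
  (b : HilbertBasis ι 𝕜 E)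

theorem ext_inner_apply {A B : E →L[𝕜] E}
    (h : ∀ i j, inner 𝕜 (b i) (A (b j)) = inner 𝕜 (b i) (B (b j))) : A = B := by
  refine ContinuousLinearMap.ext_on (s := Set.range b) ?_ ?_
  · rw [Submodule.dense_iff_topologicalClosure_eq_top, b.dense_span]
  · rintro _ ⟨j, rfl⟩
    refine b.repr.injective (lp.ext (funext fun i => ?_))
    simp only [b.repr_apply_apply, h]

theorem hasSum_inner_comp_apply (A B : E →L[𝕜] E) (i j : ι) :
    HasSum (fun n => inner 𝕜 (b i) (A (b n)) * inner 𝕜 (b n) (B (b j)))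
      (inner 𝕜 (b i) ((A ∘L B) (b j))) := by
  simpa [b.repr_apply_apply, inner_smul_right, mul_comm] using
    (b.hasSum_repr (B (b j))).mapL ((innerSL 𝕜 (b i)).comp A)

variable {b}

theorem inner_apply_of_diag {D : E →L[𝕜] E} {d : ι → 𝕜} (hD : ∀ n, D (b n) = d n • b n)
    [DecidableEq ι] (i j : ι) : inner 𝕜 (b i) (D (b j)) = if i = j then d j else 0 := by
  rw [hD, inner_smul_right, orthonormal_iff_ite.mp b.orthonormal]
  split_ifs <;> simp

theorem hasSum_inner_comp_diag_comp {D : E →L[𝕜] E} {d : ι → 𝕜} (hD : ∀ n, D (b n) = d n • b n)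
    (A B : E →L[𝕜] E) (i j : ι) :
    HasSum (fun n => inner 𝕜 (b i) (A (b n)) * d n * inner 𝕜 (b n) (B (b j)))
      (inner 𝕜 (b i) ((A ∘L D ∘L B) (b j))) := by
  classical
  have hDB (n : ι) : inner 𝕜 (b n) ((D ∘L B) (b j)) = d n * inner 𝕜 (b n) (B (b j)) := by
    refine (b.hasSum_inner_comp_apply D B n j).unique ?_
    convert hasSum_ite_eq n (d n * inner 𝕜 (b n) (B (b j))) using 2 with m
    rw [inner_apply_of_diag hD]
    rcases eq_or_ne m n with rfl | hmn
    · simp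
    · simp [hmn, hmn.symm]
  simpa only [hDB, mul_assoc] using b.hasSum_inner_comp_apply A (D ∘L B) i j

end HilbertBasis

local notation "ℓ²" => lp (fun _ : ℕ => ℂ) 2

theorem coe_default_hilbertBasis : ⇑(default : HilbertBasis ℕ ℂ ℓ²) = e := by
  ext1 n
  rw [← HilbertBasis.repr_symm_single]
  rfl

theorem hasSum_one_div_add_mul_add_add_one {c : ℝ} (hc : 0 < c) :
    HasSum (fun n : ℕ => 1 / (((n : ℝ) + c) * ((n : ℝ) + c + 1))) (1 / c) := by
  have hterm (n : ℕ) : 1 / (((n : ℝ) + c) * ((n : ℝ) + c + 1))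
      = 1 / ((n : ℝ) + c) - 1 / (((n + 1 : ℕ) : ℝ) + c) := by
    have : (0 : ℝ) < n + c := by positivity
    push_cast
    field_simp
    ring
  have hpartial (N : ℕ) : ∑ n ∈ range N, 1 / (((n : ℝ) + c) * ((n : ℝ) + c + 1))
      = 1 / c - 1 / ((N : ℝ) + c) := by
    simp only [hterm, sum_range_sub', Nat.cast_zero, zero_add]
  rw [hasSum_iff_tendsto_nat_of_nonneg (fun n => by positivity), funext hpartial]
  have hlim : Tendsto (fun N : ℕ => 1 / ((N : ℝ) + c)) atTop (nhds 0) :=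
    tendsto_const_nhds.div_atTop (tendsto_atTop_add_const_right _ c tendsto_natCast_atTop_atTop)
  simpa using tendsto_const_nhds.sub hlim

theorem natCast_add_one_add_pos {α : ℝ} (hα : -1 < α) (k : ℕ) : 0 < (k : ℝ) + 1 + α := by
  linarith [(k.cast_nonneg : (0 : ℝ) ≤ k)]

noncomputable def cesaroEntry (α : ℝ) (i j : ℕ) : ℝ := if j ≤ i then 1 / ((i : ℝ) + 1 + α) else 0

noncomputable def cesaroQ (α : ℝ) (n : ℕ) : ℝ := if n = 0 then 1 + α else 1

noncomputable def cesaroP (α : ℝ) (n : ℕ) : ℝ := ((n : ℝ) + 1 + α) / ((n : ℝ) + 2 + α)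

theorem sum_range_succ_cesaroQ (α : ℝ) (k : ℕ) :
    ∑ n ∈ range (k + 1), cesaroQ α n = k + 1 + α := by
  simp only [cesaroQ, sum_range_succ', Nat.add_eq_zero_iff, one_ne_zero, and_false, ↓reduceIte,
    sum_const, card_range, nsmul_eq_mul, mul_one]
  ring

theorem hasSum_cesaroEntry_mul_cesaroQ {α : ℝ} (hα : -1 < α) (i j : ℕ) :
    HasSum (fun n => cesaroEntry α i n * cesaroQ α n * cesaroEntry α j n)
      (1 / ((max i j : ℕ) + 1 + α)) := by
  wlog hij : i ≤ j generalizing i j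
  · simpa only [mul_comm, mul_left_comm, max_comm] using this j i (by omega)
  have hvanish : ∀ n ∉ range (i + 1), cesaroEntry α i n * cesaroQ α n * cesaroEntry α j n = 0 := by
    intro n hn
    simp only [mem_range, not_lt] at hn
    simp [cesaroEntry, show ¬ n ≤ i by omega]
  convert (hasSum_sum_of_ne_finset_zero hvanish : HasSum _ _) using 1
  have hterm : ∀ n ∈ range (i + 1), cesaroEntry α i n * cesaroQ α n * cesaroEntry α j n
      = 1 / ((i : ℝ) + 1 + α) * (1 / ((j : ℝ) + 1 + α)) * cesaroQ α n := by
    intro n hn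
    simp only [mem_range] at hn
    simp only [cesaroEntry, if_pos (show n ≤ i by omega), if_pos (show n ≤ j by omega)]
    ring
  have hi := natCast_add_one_add_pos hα i
  have hj := natCast_add_one_add_pos hα j
  rw [sum_congr rfl hterm, ← mul_sum, sum_range_succ_cesaroQ, max_eq_right hij]
  field_simp

theorem hasSum_cesaroEntry_mul_cesaroP {α : ℝ} (hα : -1 < α) (i j : ℕ) :
    HasSum (fun n => cesaroEntry α n i * cesaroP α n * cesaroEntry α n j)
      (1 / ((max i j : ℕ) + 1 + α)) := by
  set m := max i j
  have hvanish : ∑ n ∈ range m, cesaroEntry α n i * cesaroP α n * cesaroEntry α n j = 0 := by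
    refine sum_eq_zero fun n hn => ?_
    simp only [mem_range] at hn
    rcases lt_max_iff.mp hn with h | h <;> simp [cesaroEntry, Nat.not_le.mpr h]
  have hshift (n : ℕ) : cesaroEntry α (n + m) i * cesaroP α (n + m) * cesaroEntry α (n + m) j
      = 1 / (((n : ℝ) + (m + 1 + α)) * ((n : ℝ) + (m + 1 + α) + 1)) := by
    have hx := natCast_add_one_add_pos hα (n + m)
    push_cast at hx
    simp only [cesaroEntry, cesaroP, if_pos (show i ≤ n + m by omega),
      if_pos (show j ≤ n + m by omega)]
    rw [show (n : ℝ) + (m + 1 + α) = n + m + 1 + α by ring]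
    push_cast
    rw [show (n : ℝ) + m + 2 + α = n + m + 1 + α + 1 by ring]
    field_simp
  rw [← hasSum_nat_add_iff' m, hvanish, sub_zero, funext hshift]
  exact hasSum_one_div_add_mul_add_add_one (natCast_add_one_add_pos hα m)

/-- For the generalized Cesàro operator of order one `C`,
with `Q = diag{1+α, 1, 1, ...}` and `P = diag{(n+1+α)/(n+2+α)}`, one has
`C Q C* = C* P C`. -/
theorem cesaro_order_one_interrupter_identity (α : ℝ) (hα : α > -1)
    (C Q P : lp (fun _ : ℕ => ℂ) 2 →L[ℂ] lp (fun _ : ℕ => ℂ) 2)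
    (hC : ∀ i j : ℕ, (inner ℂ (e i) (C (e j)) : ℂ) =
      if j ≤ i then ((1 / ((i : ℝ) + 1 + α) : ℝ) : ℂ) else 0)
    (hQ : ∀ n : ℕ, Q (e n) = (if n = 0 then ((1 + α : ℝ) : ℂ) else 1) • e n)
    (hP : ∀ n : ℕ, P (e n) =
      ((((n : ℝ) + 1 + α) / ((n : ℝ) + 2 + α) : ℝ) : ℂ) • e n) :
    C ∘L Q ∘L adjoint C = adjoint C ∘L P ∘L C := by
  set b : HilbertBasis ℕ ℂ ℓ² := default
  have hb : ⇑b = e := coe_default_hilbertBasis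
  have hCb (i j : ℕ) : inner ℂ (b i) (C (b j)) = cesaroEntry α i j := by
    rw [hb, hC, cesaroEntry]
    split_ifs <;> simp
  have hCadjb (i j : ℕ) : inner ℂ (b i) (adjoint C (b j)) = cesaroEntry α j i := by
    rw [adjoint_inner_right, ← inner_conj_symm, hCb, Complex.conj_ofReal]
  have hQb (n : ℕ) : Q (b n) = (cesaroQ α n : ℂ) • b n := by
    rw [hb, hQ, cesaroQ]
    split_ifs <;> simp
  have hPb (n : ℕ) : P (b n) = (cesaroP α n : ℂ) • b n := by
    rw [hb, hP, cesaroP]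
  refine b.ext_inner_apply fun i j => ?_
  have hL := b.hasSum_inner_comp_diag_comp hQb C (adjoint C) i j
  have hR := b.hasSum_inner_comp_diag_comp hPb (adjoint C) C i j
  simp only [hCb, hCadjb, ← Complex.ofReal_mul] at hL hR
  rw [hL.unique (Complex.hasSum_ofReal.mpr (hasSum_cesaroEntry_mul_cesaroQ hα i j)),
    hR.unique (Complex.hasSum_ofReal.mpr (hasSum_cesaroEntry_mul_cesaroP hα i j))]
end

section
/- For every real number α ≥ 0, the generalized Cesàro operator of order one C = (C^(α),1) on ℓ² is hyponormal; that is, ⟨(C*C − CC*) f, f⟩ ≥ 0 for all f ∈ ℓ². -/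
open scoped ComplexOrder
open ContinuousLinearMap

/-!
Hyponormality amounts to `‖C* f‖ ≤ ‖C f‖`, and by continuity it suffices to check this for `f`
supported on `[0, N)`. Write `w_j = 1/(j+1+α)` and `S_k = f_0 + ⋯ + f_{k-1}`; then
`(C f)_i = w_i S_{i+1}` and `(C* f)_i = ∑_{i ≤ j < N} w_j f_j`. Because `(j+1+α) w_j = 1`, the
quantity `α |∑_{j<N} w_j f_j|² + ∑_{i<N} |∑_{i≤j<N} w_j f_j|²` increases by exactly
`w_N (|S_{N+1}|² - |S_N|²)` from `N` to `N + 1`, and `w_N - w_{N+1} = w_N w_{N+1}` turns this into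
the bound `∑_{i<N} w_i² |S_{i+1}|² + w_N |S_N|²` by induction. Viewing `f` as supported on
`[0, M)` for `M ≥ N`, this gives `‖C* f‖² ≤ ‖C f‖² + w_M |S_N|²`, and `w_M → 0`.
-/

open Complex ComplexConjugate Finset Filter Topology

noncomputable def cesaroWeight (α : ℝ) (n : ℕ) : ℝ := 1 / ((n : ℝ) + 1 + α)

section Weights

variable {α : ℝ}

lemma cesaroWeight_pos (hα : -1 < α) (n : ℕ) : 0 < cesaroWeight α n := by
  have : (0 : ℝ) ≤ n := n.cast_nonneg
  exact one_div_pos.mpr (by linarith)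

lemma add_one_add_mul_cesaroWeight (hα : -1 < α) (n : ℕ) :
    ((n : ℝ) + 1 + α) * cesaroWeight α n = 1 :=
  mul_one_div_cancel (cesaroWeight_pos hα n |> one_div_pos.mp).ne'

lemma cesaroWeight_sub_succ (hα : -1 < α) (n : ℕ) :
    cesaroWeight α n - cesaroWeight α (n + 1) = cesaroWeight α n * cesaroWeight α (n + 1) := by
  have h := add_one_add_mul_cesaroWeight hα n
  have h' := add_one_add_mul_cesaroWeight hα (n + 1)
  push_cast at h'
  linear_combination cesaroWeight α (n + 1) * h - cesaroWeight α n * h'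

lemma tendsto_cesaroWeight_atTop (α : ℝ) : Tendsto (cesaroWeight α) atTop (𝓝 0) := by
  have h : Tendsto (fun n : ℕ => (n : ℝ) + 1 + α) atTop atTop :=
    tendsto_atTop_add_const_right _ α
      (tendsto_atTop_add_const_right _ 1 tendsto_natCast_atTop_atTop)
  have hw : cesaroWeight α = (fun n : ℕ => (n : ℝ) + 1 + α)⁻¹ := by
    funext n; simp [cesaroWeight]
  exact hw ▸ h.inv_tendsto_atTop

end Weights

lemma sum_range_sum_Ico_eq {M : Type*} [AddCommMonoid M] (F : ℕ → M) (N : ℕ) :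
    ∑ i ∈ range N, ∑ j ∈ Ico i N, F j = ∑ j ∈ range N, (j + 1) • F j := by
  rw [range_eq_Ico, sum_Ico_Ico_comm]
  simp only [sum_const, Nat.card_Ico, Nat.sub_zero]

lemma normSq_add_ofReal_mul (a x : ℂ) (r : ℝ) :
    normSq (a + r * x) = normSq a + r ^ 2 * normSq x + 2 * r * (a * conj x).re := by
  rw [normSq_add, normSq_mul, normSq_ofReal, map_mul, conj_ofReal, mul_left_comm, re_ofReal_mul]
  ring

/-- For `c` supported on `[0, N)` the second term is `‖C* c‖²`; the first one makes the increments
in `adjointEnergy_succ` exact. -/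
noncomputable def adjointEnergy (α : ℝ) (c : ℕ → ℂ) (N : ℕ) : ℝ :=
  α * normSq (∑ j ∈ range N, (cesaroWeight α j : ℂ) * c j)
    + ∑ i ∈ range N, normSq (∑ j ∈ Ico i N, (cesaroWeight α j : ℂ) * c j)

section Energy

variable {α : ℝ} (c : ℕ → ℂ)

lemma sum_range_sum_Ico_cesaroWeight_mul (hα : -1 < α) (N : ℕ) :
    ∑ i ∈ range N, ∑ j ∈ Ico i N, (cesaroWeight α j : ℂ) * c j
      = ∑ j ∈ range N, c j - α * ∑ j ∈ range N, (cesaroWeight α j : ℂ) * c j := by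
  rw [sum_range_sum_Ico_eq, mul_sum, ← sum_sub_distrib]
  refine sum_congr rfl fun j _ => ?_
  have h := congrArg ofReal (add_one_add_mul_cesaroWeight hα j)
  push_cast at h
  rw [nsmul_eq_mul]
  push_cast
  linear_combination c j * h

lemma adjointEnergy_succ (hα : -1 < α) (N : ℕ) :
    adjointEnergy α c (N + 1) = adjointEnergy α c N
      + cesaroWeight α N * (normSq (∑ j ∈ range (N + 1), c j) - normSq (∑ j ∈ range N, c j)) := by
  have hIco : ∀ i ∈ range (N + 1), ∑ j ∈ Ico i (N + 1), (cesaroWeight α j : ℂ) * c j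
      = ∑ j ∈ Ico i N, (cesaroWeight α j : ℂ) * c j + cesaroWeight α N * c N := fun i hi =>
    sum_Ico_succ_top (Nat.lt_succ_iff.mp (mem_range.mp hi)) _
  have hcross : ∑ i ∈ range N, ((∑ j ∈ Ico i N, (cesaroWeight α j : ℂ) * c j) * conj (c N)).re
      = ((∑ j ∈ range N, c j) * conj (c N)).re
        - α * ((∑ j ∈ range N, (cesaroWeight α j : ℂ) * c j) * conj (c N)).re := by
    rw [← re_sum, ← sum_mul, sum_range_sum_Ico_cesaroWeight_mul c hα, sub_mul, sub_re, mul_assoc,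
      re_ofReal_mul]
  unfold adjointEnergy
  rw [sum_congr rfl fun i hi => congrArg normSq (hIco i hi), sum_range_succ _ N, sum_range_succ _ N,
    sum_range_succ c, Ico_self, sum_empty, zero_add]
  simp only [normSq_add_ofReal_mul, sum_add_distrib, sum_const, card_range, nsmul_eq_mul,
    ← mul_sum, hcross]
  simp only [normSq_add, normSq_mul, normSq_ofReal]
  linear_combination (cesaroWeight α N * normSq (c N)) * add_one_add_mul_cesaroWeight hα N

lemma adjointEnergy_le (hα : -1 < α) (N : ℕ) :
    adjointEnergy α c N ≤ ∑ i ∈ range N, cesaroWeight α i ^ 2 * normSq (∑ j ∈ range (i + 1), c j)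
      + cesaroWeight α N * normSq (∑ j ∈ range N, c j) := by
  induction N with
  | zero => simp [adjointEnergy]
  | succ N ih =>
    set p := cesaroWeight α N
    set q := cesaroWeight α (N + 1)
    have hp_sq : p ≤ p ^ 2 + q := by
      nlinarith [cesaroWeight_sub_succ hα N, cesaroWeight_pos hα N, cesaroWeight_pos hα (N + 1)]
    rw [adjointEnergy_succ c hα, sum_range_succ (fun i => cesaroWeight α i ^ 2 * _)]
    nlinarith [normSq_nonneg (∑ j ∈ range (N + 1), c j)]

end Energy

open scoped InnerProductSpace

local notation "ℓ²" => lp (fun _ : ℕ => ℂ) 2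

lemma inner_e_left (y : ℓ²) (i : ℕ) : ⟪e i, y⟫_ℂ = y i := by
  rw [e, lp.inner_single_left, RCLike.inner_apply', map_one, one_mul]

lemma hasSum_norm_sq_apply (y : ℓ²) : HasSum (fun i => ‖y i‖ ^ 2) (‖y‖ ^ 2) := by
  simpa using lp.hasSum_norm (p := 2) (by norm_num) y

lemma apply_sum_smul_e (T : ℓ² →L[ℂ] ℓ²) (c : ℕ → ℂ) (s : Finset ℕ) (i : ℕ) :
    T (∑ j ∈ s, c j • e j) i = ∑ j ∈ s, ⟪e i, T (e j)⟫_ℂ * c j := by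
  simp only [← inner_e_left, map_sum, map_smul, inner_sum, inner_smul_right, mul_comm]

lemma adjoint_sum_smul_e (T : ℓ² →L[ℂ] ℓ²) (c : ℕ → ℂ) (s : Finset ℕ) (i : ℕ) :
    adjoint T (∑ j ∈ s, c j • e j) i = ∑ j ∈ s, conj ⟪e j, T (e i)⟫_ℂ * c j := by
  simp only [← inner_e_left, adjoint_inner_right, inner_sum, inner_smul_right, inner_conj_symm,
    mul_comm]

lemma inner_adjoint_comp_sub_comp_adjoint_apply {𝕜 E : Type*} [RCLike 𝕜] [NormedAddCommGroup E]
    [InnerProductSpace 𝕜 E] [CompleteSpace E] (T : E →L[𝕜] E) (f : E) :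
    ⟪(adjoint T ∘L T - T ∘L adjoint T) f, f⟫_𝕜 = ((‖T f‖ ^ 2 - ‖adjoint T f‖ ^ 2 : ℝ) : 𝕜) := by
  have h1 : ⟪adjoint T (T f), f⟫_𝕜 = ⟪T f, T f⟫_𝕜 := adjoint_inner_left T f (T f)
  have h2 : ⟪T (adjoint T f), f⟫_𝕜 = ⟪adjoint T f, adjoint T f⟫_𝕜 := by
    simpa only [adjoint_adjoint] using adjoint_inner_left (adjoint T) f (adjoint T f)
  rw [sub_apply, inner_sub_left, comp_apply, comp_apply, h1, h2, inner_self_eq_norm_sq_to_K,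
    inner_self_eq_norm_sq_to_K]
  push_cast
  rfl

def IsCesaroMatrix (α : ℝ) (C : ℓ² →L[ℂ] ℓ²) : Prop :=
  ∀ i j : ℕ, ⟪e i, C (e j)⟫_ℂ = if j ≤ i then (cesaroWeight α i : ℂ) else 0

namespace IsCesaroMatrix

variable {α : ℝ} {C : ℓ² →L[ℂ] ℓ²} {c : ℕ → ℂ} {N : ℕ}

lemma apply_sum_smul_e (hC : IsCesaroMatrix α C) (hc : ∀ j, N ≤ j → c j = 0) (i : ℕ) :
    C (∑ j ∈ range N, c j • e j) i = cesaroWeight α i * ∑ j ∈ range (i + 1), c j := by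
  have hfilter : {j ∈ range N | j ≤ i} = {j ∈ range (i + 1) | j < N} := by
    ext j; simp only [mem_filter, mem_range]; omega
  rw [_root_.apply_sum_smul_e]
  simp only [hC i, ite_mul, zero_mul]
  rw [← sum_filter, hfilter, ← mul_sum, sum_filter_of_ne fun j _ hj => not_le.mp (mt (hc j) hj)]

lemma adjoint_apply_sum_smul_e (hC : IsCesaroMatrix α C) (c : ℕ → ℂ) (N i : ℕ) :
    adjoint C (∑ j ∈ range N, c j • e j) i = ∑ j ∈ Ico i N, cesaroWeight α j * c j := by
  rw [_root_.adjoint_sum_smul_e]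
  simp only [fun j => hC j i, apply_ite conj, map_zero, conj_ofReal, ite_mul, zero_mul]
  rw [← sum_filter, range_eq_Ico, Ico_filter_le, Nat.zero_max]

lemma norm_adjoint_sq_le (hα : 0 ≤ α) (hC : IsCesaroMatrix α C) (hc : ∀ j, N ≤ j → c j = 0) :
    ‖adjoint C (∑ j ∈ range N, c j • e j)‖ ^ 2
      ≤ ‖C (∑ j ∈ range N, c j • e j)‖ ^ 2 + cesaroWeight α N * normSq (∑ j ∈ range N, c j) := by
  set F := ∑ j ∈ range N, c j • e j
  have hadj : ‖adjoint C F‖ ^ 2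
      = ∑ i ∈ range N, normSq (∑ j ∈ Ico i N, (cesaroWeight α j : ℂ) * c j) := by
    refine (hasSum_norm_sq_apply _).unique ?_
    simp only [← hC.adjoint_apply_sum_smul_e, normSq_eq_norm_sq]
    refine hasSum_sum_of_ne_finset_zero fun i hi => ?_
    rw [hC.adjoint_apply_sum_smul_e, Ico_eq_empty (by simpa using hi)]
    simp
  have hCF : ∑ i ∈ range N, cesaroWeight α i ^ 2 * normSq (∑ j ∈ range (i + 1), c j)
      ≤ ‖C F‖ ^ 2 := by
    refine le_of_eq_of_le (sum_congr rfl fun i _ => ?_)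
      (sum_le_hasSum (range N) (fun i _ => by positivity) (hasSum_norm_sq_apply (C F)))
    rw [hC.apply_sum_smul_e hc, ← normSq_eq_norm_sq, normSq_mul, normSq_ofReal, sq]
  have henergy := adjointEnergy_le (α := α) c (by linarith) N
  unfold adjointEnergy at henergy
  nlinarith [normSq_nonneg (∑ j ∈ range N, (cesaroWeight α j : ℂ) * c j)]

lemma norm_adjoint_le (hα : 0 ≤ α) (hC : IsCesaroMatrix α C) (hc : ∀ j, N ≤ j → c j = 0) :
    ‖adjoint C (∑ j ∈ range N, c j • e j)‖ ≤ ‖C (∑ j ∈ range N, c j • e j)‖ := by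
  set F := ∑ j ∈ range N, c j • e j
  set S := ∑ j ∈ range N, c j
  have hbound : ∀ M ≥ N, ‖adjoint C F‖ ^ 2 ≤ ‖C F‖ ^ 2 + cesaroWeight α M * normSq S := by
    intro M hM
    have hF : ∑ j ∈ range M, c j • e j = F :=
      eventually_constant_sum (fun j hj => by rw [hc j hj, zero_smul]) hM
    have hS : ∑ j ∈ range M, c j = S := eventually_constant_sum hc hM
    simpa only [hF, hS] using norm_adjoint_sq_le hα hC fun j hj => hc j (hM.trans hj)
  have hlim : Tendsto (fun M => ‖C F‖ ^ 2 + cesaroWeight α M * normSq S) atTop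
      (𝓝 (‖C F‖ ^ 2)) := by
    simpa using ((tendsto_cesaroWeight_atTop α).mul_const (normSq S)).const_add (‖C F‖ ^ 2)
  exact (pow_le_pow_iff_left₀ (norm_nonneg _) (norm_nonneg _) two_ne_zero).mp
    (ge_of_tendsto hlim (eventually_atTop.mpr ⟨N, hbound⟩))

end IsCesaroMatrix

lemma norm_le_norm_of_forall_finite_support {F G : Type*} [SeminormedAddCommGroup F]
    [SeminormedAddCommGroup G] {A : ℓ² → F} {B : ℓ² → G} (hA : Continuous A) (hB : Continuous B)
    (h : ∀ (c : ℕ → ℂ) (N : ℕ), (∀ j, N ≤ j → c j = 0) →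
      ‖A (∑ j ∈ range N, c j • e j)‖ ≤ ‖B (∑ j ∈ range N, c j • e j)‖) (f : ℓ²) :
    ‖A f‖ ≤ ‖B f‖ := by
  have htrunc : Tendsto (fun N => ∑ j ∈ range N, f j • e j) atTop (𝓝 f) := by
    simpa [e, ← lp.single_smul] using (lp.hasSum_single ENNReal.ofNat_ne_top f).tendsto_sum_nat
  refine le_of_tendsto_of_tendsto' ((hA.tendsto f).comp htrunc).norm
    ((hB.tendsto f).comp htrunc).norm fun N => ?_
  have htrunc_eq : ∑ j ∈ range N, (if j < N then f j else 0) • e j = ∑ j ∈ range N, f j • e j :=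
    sum_congr rfl fun j hj => by rw [if_pos (mem_range.mp hj)]
  simpa only [Function.comp_apply, htrunc_eq] using
    h (fun j => if j < N then f j else 0) N fun j hj => if_neg (not_lt.mpr hj)

/-- For every `α ≥ 0`, the generalized Cesàro operator of
order one is hyponormal: `⟨(C*C − CC*) f, f⟩ ≥ 0` for all `f`. -/
theorem cesaro_order_one_hyponormal (α : ℝ) (hα : 0 ≤ α)
    (C : lp (fun _ : ℕ => ℂ) 2 →L[ℂ] lp (fun _ : ℕ => ℂ) 2)
    (hC : ∀ i j : ℕ, (inner ℂ (e i) (C (e j)) : ℂ) =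
      if j ≤ i then ((1 / ((i : ℝ) + 1 + α) : ℝ) : ℂ) else 0) :
    ∀ f, 0 ≤ (inner ℂ ((adjoint C ∘L C - C ∘L adjoint C) f) f : ℂ) := by
  intro f
  rw [inner_adjoint_comp_sub_comp_adjoint_apply, RCLike.ofReal_nonneg, sub_nonneg]
  gcongr
  exact norm_le_norm_of_forall_finite_support (adjoint C).continuous C.continuous
    (fun c N hc => IsCesaroMatrix.norm_adjoint_le hα hC hc) f
end

section
/- For every real number α > −1, there exists a bounded linear operator M on ℓ² whose matrix entries with respect to the standard orthonormal basis are ⟨M e_j, e_i⟩ = 2(i+1−j)/((i+1+α)(i+2+α)) for 0 ≤ j ≤ i and 0 for j > i. -/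
open Finset

theorem inv_sqrt_add_one_le_two_mul_sub {x : ℝ} (hx : 0 ≤ x) :
    (√(x + 1))⁻¹ ≤ 2 * (√(x + 1) - √x) := by
  have ha : √x ^ 2 = x := Real.sq_sqrt hx
  have hb : √(x + 1) ^ 2 = x + 1 := Real.sq_sqrt (by linarith)
  have hb0 : 0 < √(x + 1) := Real.sqrt_pos.2 (by linarith)
  rw [inv_le_iff_one_le_mul₀ hb0]
  nlinarith [sq_nonneg (√(x + 1) - √x)]

theorem sum_range_inv_sqrt_succ_le (n : ℕ) :
    ∑ j ∈ range n, (√((j : ℝ) + 1))⁻¹ ≤ 2 * √n := by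
  calc ∑ j ∈ range n, (√((j : ℝ) + 1))⁻¹
      ≤ ∑ j ∈ range n, 2 * (√((j + 1 : ℕ) : ℝ) - √(j : ℝ)) :=
        sum_le_sum fun j _ => by
          simpa using inv_sqrt_add_one_le_two_mul_sub (Nat.cast_nonneg (α := ℝ) j)
    _ = 2 * √n := by rw [← mul_sum, sum_range_sub (fun j : ℕ => √(j : ℝ))]; simp

theorem inv_sqrt_add_one_div_le {x : ℝ} (hx : 0 ≤ x) :
    (√(x + 1))⁻¹ / (x + 1) ≤ 4 * ((√(x + 1))⁻¹ - (√(x + 2))⁻¹) := by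
  have hu1 : 1 ≤ √(x + 1) := Real.one_le_sqrt.2 (by linarith)
  have huv : √(x + 1) ≤ √(x + 2) := Real.sqrt_le_sqrt (by linarith)
  have hu : √(x + 1) ^ 2 = x + 1 := Real.sq_sqrt (by linarith)
  have hv : √(x + 2) ^ 2 = x + 2 := Real.sq_sqrt (by linarith)
  set u := √(x + 1)
  set v := √(x + 2)
  have hconj : (v - u) * (u + v) = 1 := by nlinarith
  have hvu : v ≤ 2 * u := by nlinarith
  -- `v (u + v) ≤ 4 u²` because `v ≤ 2 u` and `v² = u² + 1 ≤ 2 u²`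
  have hcube : u * v * (u + v) ≤ 4 * u ^ 3 := by nlinarith
  rw [← hu, inv_sub_inv (by positivity) (by positivity), inv_eq_one_div, div_div,
    mul_div_assoc', div_le_div_iff₀ (by positivity) (by positivity)]
  refine le_of_mul_le_mul_right ?_ (by positivity : 0 < u + v)
  linear_combination hcube - 4 * u ^ 3 * hconj

theorem sum_Ico_inv_sqrt_succ_div_le (j n : ℕ) :
    ∑ i ∈ Ico j n, (√((i : ℝ) + 1))⁻¹ / ((i : ℝ) + 1) ≤ 4 * (√((j : ℝ) + 1))⁻¹ := by
  rcases le_or_gt j n with hjn | hnj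
  · calc ∑ i ∈ Ico j n, (√((i : ℝ) + 1))⁻¹ / ((i : ℝ) + 1)
        ≤ ∑ i ∈ Ico j n, -4 * ((√(((i + 1 : ℕ) : ℝ) + 1))⁻¹ - (√((i : ℝ) + 1))⁻¹) :=
          sum_le_sum fun i _ => by
            have := inv_sqrt_add_one_div_le (Nat.cast_nonneg (α := ℝ) i)
            rw [show ((i + 1 : ℕ) : ℝ) + 1 = i + 2 by push_cast; ring]
            linarith
      _ ≤ 4 * (√((j : ℝ) + 1))⁻¹ := by
          rw [← mul_sum, sum_Ico_sub (fun i : ℕ => (√((i : ℝ) + 1))⁻¹) hjn]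
          have : 0 ≤ (√((n : ℝ) + 1))⁻¹ := by positivity
          linarith
  · rw [Ico_eq_empty_of_le hnj.le, sum_empty]
    positivity

noncomputable def lowerTriangularMul (K : ℕ → ℕ → ℝ) (x : ℕ → ℂ) (i : ℕ) : ℂ :=
  ∑ j ∈ range (i + 1), (K i j : ℂ) * x j

structure SchurTestWeights (K : ℕ → ℕ → ℝ) (p h : ℕ → ℝ) (A B : ℝ) : Prop where
  kernel_nonneg : ∀ i j, j ≤ i → 0 ≤ K i j
  weight_pos : ∀ j, 0 < p j
  left_nonneg : 0 ≤ A
  right_nonneg : 0 ≤ B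
  sum_row_le : ∀ i, ∑ j ∈ range (i + 1), K i j * p j ≤ A * h i
  sum_col_le : ∀ j n, ∑ i ∈ Ico j n, K i j * h i ≤ B * p j

section LowerTriangular

variable {K : ℕ → ℕ → ℝ} {p h : ℕ → ℝ} {A B : ℝ}

theorem lowerTriangularMul_add (x y : ℕ → ℂ) :
    lowerTriangularMul K (x + y) = lowerTriangularMul K x + lowerTriangularMul K y := by
  ext i
  simp [lowerTriangularMul, mul_add, sum_add_distrib]

theorem lowerTriangularMul_smul (a : ℂ) (x : ℕ → ℂ) :
    lowerTriangularMul K (a • x) = a • lowerTriangularMul K x := by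
  ext i
  simp [lowerTriangularMul, mul_sum, mul_left_comm]

theorem norm_sq_lowerTriangularMul_le (hK : ∀ i j, j ≤ i → 0 ≤ K i j) (hp : ∀ j, 0 < p j)
    (x : ℕ → ℂ) (i : ℕ) :
    ‖lowerTriangularMul K x i‖ ^ 2 ≤
      (∑ j ∈ range (i + 1), K i j * p j) * ∑ j ∈ range (i + 1), K i j * (‖x j‖ ^ 2 / p j) := by
  have hKi : ∀ j ∈ range (i + 1), 0 ≤ K i j := fun j hj =>
    hK i j (Nat.lt_succ_iff.1 (mem_range.1 hj))
  have htri : ‖lowerTriangularMul K x i‖ ≤ ∑ j ∈ range (i + 1), K i j * ‖x j‖ :=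
    (norm_sum_le _ _).trans_eq <| sum_congr rfl fun j hj => by
      rw [norm_mul, Complex.norm_real, Real.norm_of_nonneg (hKi j hj)]
  refine (pow_le_pow_left₀ (norm_nonneg _) htri 2).trans ?_
  refine sum_sq_le_sum_mul_sum_of_sq_le_mul _ (fun j hj => mul_nonneg (hKi j hj) (hp j).le)
    (fun j hj => mul_nonneg (hKi j hj) (by have := hp j; positivity)) fun j _ => le_of_eq ?_
  field_simp [(hp j).ne']

theorem SchurTestWeights.sum_range_norm_sq_le (hS : SchurTestWeights K p h A B) (x : ℕ → ℂ)
    (n : ℕ) :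
    ∑ i ∈ range n, ‖lowerTriangularMul K x i‖ ^ 2 ≤ A * B * ∑ j ∈ range n, ‖x j‖ ^ 2 := by
  set c : ℕ → ℝ := fun j => ‖x j‖ ^ 2 / p j
  have hc : ∀ j, 0 ≤ c j := fun j => by have := hS.weight_pos j; positivity
  calc ∑ i ∈ range n, ‖lowerTriangularMul K x i‖ ^ 2
      ≤ ∑ i ∈ range n, A * h i * ∑ j ∈ range (i + 1), K i j * c j :=
        sum_le_sum fun i _ =>
          (norm_sq_lowerTriangularMul_le hS.kernel_nonneg hS.weight_pos x i).trans <|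
            mul_le_mul_of_nonneg_right (hS.sum_row_le i) <| sum_nonneg fun j hj =>
              mul_nonneg (hS.kernel_nonneg i j (Nat.lt_succ_iff.1 (mem_range.1 hj))) (hc j)
    _ = A * ∑ j ∈ range n, c j * ∑ i ∈ Ico j n, K i j * h i := by
        simp only [range_eq_Ico, mul_sum]
        rw [← sum_Ico_Ico_comm]
        exact sum_congr rfl fun j _ => sum_congr rfl fun i _ => by ring
    _ ≤ A * ∑ j ∈ range n, c j * (B * p j) :=
        mul_le_mul_of_nonneg_left (sum_le_sum fun j _ =>
          mul_le_mul_of_nonneg_left (hS.sum_col_le j n) (hc j)) hS.left_nonneg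
    _ = A * B * ∑ j ∈ range n, ‖x j‖ ^ 2 := by
        rw [mul_sum, mul_sum]
        refine sum_congr rfl fun j _ => ?_
        simp only [c]
        field_simp [(hS.weight_pos j).ne']

theorem SchurTestWeights.sum_norm_sq_le (hS : SchurTestWeights K p h A B)
    (x : lp (fun _ : ℕ => ℂ) 2) (s : Finset ℕ) :
    ∑ i ∈ s, ‖lowerTriangularMul K x i‖ ^ 2 ≤ A * B * ‖x‖ ^ 2 := by
  obtain ⟨n, hsn⟩ := exists_nat_subset_range s
  calc ∑ i ∈ s, ‖lowerTriangularMul K x i‖ ^ 2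
      ≤ ∑ i ∈ range n, ‖lowerTriangularMul K x i‖ ^ 2 :=
        sum_le_sum_of_subset_of_nonneg hsn fun _ _ _ => sq_nonneg _
    _ ≤ A * B * ∑ j ∈ range n, ‖x j‖ ^ 2 := hS.sum_range_norm_sq_le x n
    _ ≤ A * B * ‖x‖ ^ 2 := by
        refine mul_le_mul_of_nonneg_left ?_ (mul_nonneg hS.left_nonneg hS.right_nonneg)
        simpa using lp.sum_rpow_le_norm_rpow (by norm_num : 0 < (2 : ENNReal).toReal) x (range n)

theorem SchurTestWeights.exists_clm (hS : SchurTestWeights K p h A B) :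
    ∃ M : lp (fun _ : ℕ => ℂ) 2 →L[ℂ] lp (fun _ : ℕ => ℂ) 2,
      ∀ x i, M x i = lowerTriangularMul K x i := by
  have hmem (x : lp (fun _ : ℕ => ℂ) 2) : Memℓp (lowerTriangularMul K x) 2 :=
    memℓp_gen' fun s => by simpa using hS.sum_norm_sq_le x s
  let L : lp (fun _ : ℕ => ℂ) 2 →ₗ[ℂ] lp (fun _ : ℕ => ℂ) 2 :=
    { toFun x := ⟨lowerTriangularMul K x, hmem x⟩
      map_add' x y := Subtype.ext <| by simp only [lp.coeFn_add, lowerTriangularMul_add]; rfl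
      map_smul' a x := Subtype.ext <| by simp only [lp.coeFn_smul, lowerTriangularMul_smul]; rfl }
  refine ⟨L.mkContinuous √(A * B) fun x => ?_, fun x i => rfl⟩
  refine lp.norm_le_of_forall_sum_le (by norm_num) (by positivity) fun s => ?_
  have hAB := Real.sq_sqrt (mul_nonneg hS.left_nonneg hS.right_nonneg)
  norm_num [mul_pow, hAB]
  exact hS.sum_norm_sq_le x s

theorem exists_clm_lowerTriangularMul_of_le_div_succ {c : ℝ}
    (hK : ∀ i j, j ≤ i → 0 ≤ K i j) (hKc : ∀ i j, j ≤ i → K i j ≤ c / ((i : ℝ) + 1)) :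
    ∃ M : lp (fun _ : ℕ => ℂ) 2 →L[ℂ] lp (fun _ : ℕ => ℂ) 2,
      ∀ x i, M x i = lowerTriangularMul K x i := by
  have hc : 0 ≤ c := by simpa using (hK 0 0 le_rfl).trans (hKc 0 0 le_rfl)
  set q : ℕ → ℝ := fun j => (√((j : ℝ) + 1))⁻¹
  have hq : ∀ j, 0 < q j := fun j => by positivity
  refine SchurTestWeights.exists_clm (p := q) (h := fun i => c * q i) (A := 2) (B := 4 * c ^ 2)
    ⟨hK, hq, by norm_num, by positivity, fun i => ?_, fun j n => ?_⟩
  · have hsq : √((i : ℝ) + 1) ^ 2 = (i : ℝ) + 1 := Real.sq_sqrt (by positivity)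
    calc ∑ j ∈ range (i + 1), K i j * q j
        ≤ ∑ j ∈ range (i + 1), c / ((i : ℝ) + 1) * q j :=
          sum_le_sum fun j hj => mul_le_mul_of_nonneg_right
            (hKc i j (Nat.lt_succ_iff.1 (mem_range.1 hj))) (hq j).le
      _ ≤ c / ((i : ℝ) + 1) * (2 * √((i + 1 : ℕ) : ℝ)) := by
          rw [← mul_sum]
          exact mul_le_mul_of_nonneg_left (sum_range_inv_sqrt_succ_le (i + 1)) (by positivity)
      _ = 2 * (c * q i) := by
          simp only [q]
          push_cast
          field_simp
          rw [hsq]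
  · calc ∑ i ∈ Ico j n, K i j * (c * q i)
        ≤ ∑ i ∈ Ico j n, c / ((i : ℝ) + 1) * (c * q i) :=
          sum_le_sum fun i hi => mul_le_mul_of_nonneg_right
            (hKc i j (mem_Ico.1 hi).1) (mul_nonneg hc (hq i).le)
      _ = c ^ 2 * ∑ i ∈ Ico j n, q i / ((i : ℝ) + 1) := by
          rw [mul_sum]
          exact sum_congr rfl fun i _ => by ring
      _ ≤ c ^ 2 * (4 * q j) :=
          mul_le_mul_of_nonneg_left (sum_Ico_inv_sqrt_succ_div_le j n) (sq_nonneg c)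
      _ = 4 * c ^ 2 * q j := by ring

end LowerTriangular

theorem inner_e_left_s10 (i : ℕ) (x : lp (fun _ : ℕ => ℂ) 2) : inner ℂ (e i) x = x i := by
  simp [e, lp.inner_single_left]

theorem lowerTriangularMul_e (K : ℕ → ℕ → ℝ) (i j : ℕ) :
    lowerTriangularMul K (e j) i = if j ≤ i then (K i j : ℂ) else 0 := by
  simp [lowerTriangularMul, e, lp.single_apply, Pi.single_apply]

noncomputable def generalizedCesaroKernel (α : ℝ) (i j : ℕ) : ℝ :=
  2 * ((i : ℝ) + 1 - j) / (((i : ℝ) + 1 + α) * ((i : ℝ) + 2 + α))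

section GeneralizedCesaro

variable {α : ℝ} {i j : ℕ}

theorem generalizedCesaroKernel_nonneg (hα : -1 < α) (hji : j ≤ i) :
    0 ≤ generalizedCesaroKernel α i j := by
  have : (j : ℝ) ≤ i := Nat.cast_le.2 hji
  unfold generalizedCesaroKernel
  apply div_nonneg <;> nlinarith

theorem generalizedCesaroKernel_le (hα : -1 < α) :
    generalizedCesaroKernel α i j ≤ 2 / min 1 (1 + α) / ((i : ℝ) + 1) := by
  have hm : 0 < min 1 (1 + α) := lt_min one_pos (by linarith)
  have hi : (0 : ℝ) ≤ i := Nat.cast_nonneg i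
  have hj : (0 : ℝ) ≤ j := Nat.cast_nonneg j
  have h1 : min 1 (1 + α) * ((i : ℝ) + 1) ≤ (i : ℝ) + 1 + α := by
    nlinarith [min_le_left 1 (1 + α), min_le_right 1 (1 + α)]
  have h2 : (i : ℝ) + 1 ≤ (i : ℝ) + 2 + α := by linarith
  unfold generalizedCesaroKernel
  rw [div_div, div_le_div_iff₀ (by nlinarith) (by positivity)]
  nlinarith [mul_le_mul h1 h2 (by positivity) (by nlinarith),
    mul_nonneg hj (mul_nonneg hm.le (by positivity : (0 : ℝ) ≤ i + 1))]

end GeneralizedCesaro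

/-- For every `α > -1` there is a bounded operator `M` on
`ℓ²` with matrix entries `⟨M e_j, e_i⟩ = 2(i+1−j)/((i+1+α)(i+2+α))` for
`j ≤ i` and `0` for `j > i` (the generalized Cesàro operator of order two). -/
theorem exists_generalized_cesaro_order_two (α : ℝ) (hα : α > -1) :
    ∃ M : lp (fun _ : ℕ => ℂ) 2 →L[ℂ] lp (fun _ : ℕ => ℂ) 2,
      ∀ i j : ℕ, (inner ℂ (e i) (M (e j)) : ℂ) =
        if j ≤ i then
          ((2 * ((i : ℝ) + 1 - j) / (((i : ℝ) + 1 + α) * ((i : ℝ) + 2 + α)) : ℝ) : ℂ)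
        else 0 := by
  obtain ⟨M, hM⟩ := exists_clm_lowerTriangularMul_of_le_div_succ
    (fun i j => generalizedCesaroKernel_nonneg hα) (fun i j _ => generalizedCesaroKernel_le hα)
  exact ⟨M, fun i j => by rw [inner_e_left_s10, hM, lowerTriangularMul_e]; rfl⟩
end

section
/- Let α > −1 be a real number and let i, j be natural numbers with j ≥ i. Then the series ∑_{k=0}^{∞} 4(j+1−i+k)(k+1) / [(j+1+k+α)(j+2+k+α)(j+3+k+α)(j+4+k+α)] converges and its sum equals 2(3j+3−i+2α) / [3(j+1+α)(j+2+α)]. -/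
/-!
With `x = j + 1 + α > 0` and `c = j + 1 - i`, partial fractions write the summand as a fixed linear
combination of `1 / ((y + k) * (y + k + 1))` for `y = x, x + 1, x + 2`. Each of these telescopes,
`1 / (y + k) - 1 / (y + k + 1)`, with nonnegative terms, so it sums to `1 / y`.
-/

open Filter Topology

theorem hasSum_one_div_mul_add_one {y : ℝ} (hy : 0 < y) :
    HasSum (fun k : ℕ => 1 / ((y + k) * (y + k + 1))) (1 / y) := by
  have htelescope (k : ℕ) :
      1 / ((y + k) * (y + k + 1)) = 1 / (y + k) - 1 / (y + (k + 1 : ℕ)) := by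
    push_cast
    field_simp
    ring
  rw [hasSum_iff_tendsto_nat_of_nonneg (fun k => by positivity)]
  simp only [htelescope, Finset.sum_range_sub', Nat.cast_zero, add_zero]
  have hdecay : Tendsto (fun n : ℕ => 1 / (y + n)) atTop (𝓝 0) :=
    tendsto_const_nhds.div_atTop (tendsto_atTop_add_const_left _ _ tendsto_natCast_atTop_atTop)
  simpa using tendsto_const_nhds.sub hdecay

theorem hasSum_four_mul_div_risingFactorial_four {x : ℝ} (hx : 0 < x) (c : ℝ) :
    HasSum
      (fun k : ℕ => 4 * (c + k) * (k + 1) / ((x + k) * (x + k + 1) * (x + k + 2) * (x + k + 3)))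
      (2 * (c + 2 * x) / (3 * x * (x + 1))) := by
  set a := 2 * (x - 1) * (x - c) / 3
  set b := (4 * c * x + 2 * c - 4 * x ^ 2 - 8 * x) / 3
  set d := (2 * x ^ 2 + 10 * x + 12 - 2 * c * x - 4 * c) / 3
  have hpartial (k : ℕ) :
      4 * (c + k) * (k + 1) / ((x + k) * (x + k + 1) * (x + k + 2) * (x + k + 3)) =
        a * (1 / ((x + k) * (x + k + 1))) + b * (1 / ((x + 1 + k) * (x + 1 + k + 1))) +
          d * (1 / ((x + 2 + k) * (x + 2 + k + 1))) := by
    have hk : 0 < x + k := add_pos_of_pos_of_nonneg hx (Nat.cast_nonneg k)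
    have : x + k + 1 ≠ 0 := by linarith
    have : x + k + 2 ≠ 0 := by linarith
    have : x + k + 3 ≠ 0 := by linarith
    field_simp
    ring
  have hvalue :
      2 * (c + 2 * x) / (3 * x * (x + 1)) =
        a * (1 / x) + b * (1 / (x + 1)) + d * (1 / (x + 2)) := by
    have : x + 1 ≠ 0 := by linarith
    have : x + 2 ≠ 0 := by linarith
    field_simp
    ring
  simp only [hpartial, hvalue]
  exact (((hasSum_one_div_mul_add_one hx).mul_left a).add
    ((hasSum_one_div_mul_add_one (by linarith : 0 < x + 1)).mul_left b)).add
    ((hasSum_one_div_mul_add_one (by linarith : 0 < x + 2)).mul_left d)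

theorem telescoping_series_cesaro_order_two_general (α : ℝ) (hα : α > -1)
    (i j : ℕ) :
    HasSum
      (fun k : ℕ =>
        4 * ((j : ℝ) + 1 - i + k) * ((k : ℝ) + 1) /
          (((j : ℝ) + 1 + k + α) * ((j : ℝ) + 2 + k + α) *
            ((j : ℝ) + 3 + k + α) * ((j : ℝ) + 4 + k + α)))
      (2 * (3 * (j : ℝ) + 3 - i + 2 * α) /
        (3 * ((j : ℝ) + 1 + α) * ((j : ℝ) + 2 + α))) := by
  have hx : 0 < (j : ℝ) + 1 + α := by linarith [(j.cast_nonneg : (0 : ℝ) ≤ j)]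
  convert hasSum_four_mul_div_risingFactorial_four hx ((j : ℝ) + 1 - i) using 1
  · ext k
    ring
  · ring

/-- For `α > -1` and natural numbers `j ≥ i`, the series
`∑_{k≥0} 4(j+1−i+k)(k+1)/[(j+1+k+α)(j+2+k+α)(j+3+k+α)(j+4+k+α)]` converges
with sum `2(3j+3−i+2α)/[3(j+1+α)(j+2+α)]`. -/
theorem telescoping_series_cesaro_order_two (α : ℝ) (hα : α > -1)
    (i j : ℕ) (hij : i ≤ j) :
    HasSum
      (fun k : ℕ =>
        4 * ((j : ℝ) + 1 - i + k) * ((k : ℝ) + 1) /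
          (((j : ℝ) + 1 + k + α) * ((j : ℝ) + 2 + k + α) *
            ((j : ℝ) + 3 + k + α) * ((j : ℝ) + 4 + k + α)))
      (2 * (3 * (j : ℝ) + 3 - i + 2 * α) /
        (3 * ((j : ℝ) + 1 + α) * ((j : ℝ) + 2 + α))) :=
  telescoping_series_cesaro_order_two_general α hα i j
end

section
/- For every real number α > −1, there exists a bounded linear operator B on ℓ² whose matrix entries with respect to the standard orthonormal basis are ⟨B e_j, e_i⟩ = 2(j+1−3i−2α)/((j+3+α)(j+4+α)) if j > i−2, ⟨B e_j, e_i⟩ = (j+1+α)(j+2+α)/((j+3+α)(j+4+α)) if j = i−2, and 0 if j < i−2. -/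
/-!
`B` is bounded by the Schur test with the weights `w n = (n + 1) ^ (-1/2)`. Apart from the
subdiagonal `j = i - 2`, whose entries lie in `[0, 1]`, the matrix is supported in `i ≤ j + 1`,
where its entries are `O(1 / (j + 1))`. Row sums are then controlled by
`∑_{j ≥ i - 1} (j + 1) ^ (-3/2) = O(w i)`, and column sums by
`(j + 1)⁻¹ ∑_{i ≤ j + 1} w i = O((j + 1) ^ (-1/2)) = O(w j)`.
-/

open scoped ENNReal NNReal
open Finset

theorem ENNReal.tsum_coe_sq_le_tsum_mul_tsum_of_sq_le_mul {ι : Type*} {r f g : ι → ℝ≥0}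
    (h : ∀ i, r i ^ 2 ≤ f i * g i) :
    (∑' i, (r i : ℝ≥0∞)) ^ 2 ≤ (∑' i, (f i : ℝ≥0∞)) * ∑' i, (g i : ℝ≥0∞) := by
  rw [ENNReal.tsum_eq_iSup_sum, ENNReal.iSup_pow]
  refine iSup_le fun s => ?_
  calc (∑ i ∈ s, (r i : ℝ≥0∞)) ^ 2 ≤ (∑ i ∈ s, (f i : ℝ≥0∞)) * ∑ i ∈ s, (g i : ℝ≥0∞) := by
        exact_mod_cast Finset.sum_sq_le_sum_mul_sum_of_sq_le_mul s (fun _ _ => zero_le)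
          (fun _ _ => zero_le) (fun i _ => h i)
    _ ≤ _ := by gcongr <;> exact ENNReal.sum_le_tsum s

section lpTwo

variable {ι : Type*} {E : ι → Type*} [∀ i, NormedAddCommGroup (E i)]

theorem lp.tsum_enorm_sq_eq (x : lp E 2) : ∑' i, ‖x i‖ₑ ^ 2 = ENNReal.ofReal (‖x‖ ^ 2) := by
  have h := lp.norm_rpow_eq_tsum (p := 2) (by norm_num) x
  have hs := (lp.memℓp x).summable (p := 2) (by norm_num)
  simp only [ENNReal.toReal_ofNat, Real.rpow_two] at h hs
  rw [h, ENNReal.ofReal_tsum_of_nonneg (fun _ => by positivity) hs]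
  simp [ENNReal.ofReal_pow, ofReal_norm]

theorem memℓp_two_of_tsum_enorm_sq_ne_top {f : ∀ i, E i} (h : ∑' i, ‖f i‖ₑ ^ 2 ≠ ∞) :
    Memℓp f 2 := by
  refine memℓp_gen ?_
  simp only [enorm_eq_nnnorm, ← ENNReal.coe_pow, ENNReal.tsum_coe_ne_top_iff_summable] at h
  simpa using NNReal.summable_coe.2 h

end lpTwo

section SchurTest

variable {ι 𝕜 : Type*} [NormedField 𝕜] (a : ι → ι → 𝕜) {w : ι → ℝ≥0} {C : ℝ≥0}

theorem tsum_sq_tsum_enorm_mul_le_of_schur (hw : ∀ i, 0 < w i)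
    (hrow : ∀ i, ∑' j, ‖a i j‖ₑ * w j ≤ C * w i)
    (hcol : ∀ j, ∑' i, ‖a i j‖ₑ * w i ≤ C * w j) (x : ι → 𝕜) :
    ∑' i, (∑' j, ‖a i j * x j‖ₑ) ^ 2 ≤ C ^ 2 * ∑' j, ‖x j‖ₑ ^ 2 := by
  -- Cauchy–Schwarz after splitting `‖a i j‖ * ‖x j‖` as `√(‖a i j‖ * w j) * √(g i j)`.
  set g : ι → ι → ℝ≥0 := fun i j => ‖a i j‖₊ * (‖x j‖₊ ^ 2 / w j)
  have hrow_cs : ∀ i, (∑' j, ‖a i j * x j‖ₑ) ^ 2 ≤ C * w i * ∑' j, (g i j : ℝ≥0∞) := by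
    intro i
    have hcs := ENNReal.tsum_coe_sq_le_tsum_mul_tsum_of_sq_le_mul
      (r := fun j => ‖a i j‖₊ * ‖x j‖₊) (f := fun j => ‖a i j‖₊ * w j) (g := g i) fun j => by
        simp only [g]
        rw [mul_mul_mul_comm, mul_div_cancel₀ _ (hw j).ne', mul_pow, sq]
    simp_rw [enorm_mul]
    push_cast at hcs
    exact hcs.trans (by gcongr; exact hrow i)
  have hcol_sum : ∀ j, ∑' i, (w i : ℝ≥0∞) * g i j ≤ C * ‖x j‖ₑ ^ 2 := by
    intro j
    calc ∑' i, (w i : ℝ≥0∞) * g i j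
        = ((‖x j‖₊ ^ 2 / w j : ℝ≥0) : ℝ≥0∞) * ∑' i, ‖a i j‖ₑ * w i := by
          rw [← ENNReal.tsum_mul_left]
          refine tsum_congr fun i => ?_
          simp only [g, ENNReal.coe_mul, enorm_eq_nnnorm]
          ring
      _ ≤ ((‖x j‖₊ ^ 2 / w j : ℝ≥0) : ℝ≥0∞) * (C * w j) := by gcongr; exact hcol j
      _ = C * ‖x j‖ₑ ^ 2 := by
          rw [mul_left_comm, ← ENNReal.coe_mul, div_mul_cancel₀ _ (hw j).ne', enorm_eq_nnnorm,
            ENNReal.coe_pow]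
  calc ∑' i, (∑' j, ‖a i j * x j‖ₑ) ^ 2
      ≤ ∑' i, C * w i * ∑' j, (g i j : ℝ≥0∞) := ENNReal.tsum_le_tsum hrow_cs
    _ = C * ∑' j, ∑' i, (w i : ℝ≥0∞) * g i j := by
        simp_rw [mul_assoc, ENNReal.tsum_mul_left, ← ENNReal.tsum_mul_left]
        rw [ENNReal.tsum_comm]
    _ ≤ C * ∑' j, C * ‖x j‖ₑ ^ 2 := by gcongr with j; exact hcol_sum j
    _ = C ^ 2 * ∑' j, ‖x j‖ₑ ^ 2 := by rw [ENNReal.tsum_mul_left, ← mul_assoc, sq]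

theorem exists_clm_apply_eq_tsum_of_schur [CompleteSpace 𝕜] (hw : ∀ i, 0 < w i)
    (hrow : ∀ i, ∑' j, ‖a i j‖ₑ * w j ≤ C * w i)
    (hcol : ∀ j, ∑' i, ‖a i j‖ₑ * w i ≤ C * w j) :
    ∃ B : lp (fun _ : ι => 𝕜) 2 →L[𝕜] lp (fun _ : ι => 𝕜) 2,
      ∀ x i, B x i = ∑' j, a i j * x j := by
  have hbound (x : lp (fun _ : ι => 𝕜) 2) :
      ∑' i, (∑' j, ‖a i j * x j‖ₑ) ^ 2 ≤ ENNReal.ofReal ((C * ‖x‖) ^ 2) := by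
    rw [mul_pow, ENNReal.ofReal_mul (by positivity), ← lp.tsum_enorm_sq_eq]
    simpa using tsum_sq_tsum_enorm_mul_le_of_schur a hw hrow hcol x
  have hsum (x : lp (fun _ : ι => 𝕜) 2) (i : ι) : Summable fun j => a i j * x j := by
    refine Summable.of_nnnorm (tsum_enorm_ne_top_iff_summable_nnnorm.1 fun h => ?_)
    have := (ENNReal.le_tsum i).trans (hbound x)
    rw [h] at this
    simp at this
  have hle (x : lp (fun _ : ι => 𝕜) 2) :
      ∑' i, ‖∑' j, a i j * x j‖ₑ ^ 2 ≤ ENNReal.ofReal ((C * ‖x‖) ^ 2) :=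
    (ENNReal.tsum_le_tsum fun i => by gcongr; exact enorm_tsum_le_tsum_enorm).trans (hbound x)
  let L : lp (fun _ : ι => 𝕜) 2 →ₗ[𝕜] lp (fun _ : ι => 𝕜) 2 :=
    { toFun := fun x => ⟨fun i => ∑' j, a i j * x j,
        memℓp_two_of_tsum_enorm_sq_ne_top (ne_top_of_le_ne_top ENNReal.ofReal_ne_top (hle x))⟩
      map_add' := fun x y => lp.ext <| funext fun i => by
        simp only [lp.coeFn_add, Pi.add_apply, mul_add]
        exact (hsum x i).tsum_add (hsum y i)
      map_smul' := fun c x => lp.ext <| funext fun i => by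
        simp [mul_left_comm, tsum_mul_left] }
  refine ⟨L.mkContinuous C fun x => ?_, fun x i => rfl⟩
  have h := lp.tsum_enorm_sq_eq (L x) ▸ hle x
  rw [ENNReal.ofReal_le_ofReal_iff (by positivity)] at h
  exact le_of_sq_le_sq h (by positivity)

end SchurTest

noncomputable def invSqrtSucc (n : ℕ) : ℝ := (√(n + 1))⁻¹

lemma invSqrtSucc_pos (n : ℕ) : 0 < invSqrtSucc n := by
  unfold invSqrtSucc; positivity

lemma invSqrtSucc_antitone : Antitone invSqrtSucc := by
  refine antitone_nat_of_succ_le fun n => ?_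
  unfold invSqrtSucc
  gcongr
  linarith

lemma invSqrtSucc_le_two_mul {m n : ℕ} (h : n + 1 ≤ 4 * (m + 1)) :
    invSqrtSucc m ≤ 2 * invSqrtSucc n := by
  unfold invSqrtSucc
  have hm : 0 < √((m : ℝ) + 1) := by positivity
  rw [← div_eq_mul_inv, inv_le_comm₀ hm (by positivity), inv_div, div_le_iff₀ (by norm_num)]
  calc √((n : ℝ) + 1) ≤ √(2 ^ 2 * ((m : ℝ) + 1)) := Real.sqrt_le_sqrt (by exact_mod_cast h)
    _ = √((m : ℝ) + 1) * 2 := by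
      rw [Real.sqrt_mul (by norm_num), Real.sqrt_sq (by norm_num), mul_comm]

lemma invSqrtSucc_div_le (n : ℕ) :
    invSqrtSucc n / (n + 1) ≤ 4 * (invSqrtSucc n - invSqrtSucc (n + 1)) := by
  unfold invSqrtSucc
  set A := √((n : ℝ) + 1)
  set B := √(((n + 1 : ℕ) : ℝ) + 1)
  have hA : 0 < A := by positivity
  have hB : 0 < B := by positivity
  have hA2 : A ^ 2 = n + 1 := Real.sq_sqrt (by positivity)
  have hB2 : B ^ 2 = n + 2 := by rw [Real.sq_sqrt (by positivity)]; push_cast; ring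
  have hAB : A ≤ B := by nlinarith
  rw [← hA2, div_le_iff₀ (by positivity)]
  have : B * (B + A) ≤ 4 * A ^ 2 * (B ^ 2 - A ^ 2) := by nlinarith
  field_simp
  nlinarith

lemma sum_range_invSqrtSucc_le (n : ℕ) : ∑ i ∈ range n, invSqrtSucc i ≤ 2 * √n := by
  have hstep (i : ℕ) : invSqrtSucc i ≤ 2 * (√((i + 1 : ℕ) : ℝ) - √i) := by
    unfold invSqrtSucc
    have hA : 0 < √((i : ℝ) + 1) := by positivity
    have hA2 : √((i : ℝ) + 1) ^ 2 = i + 1 := Real.sq_sqrt (by positivity)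
    have hB2 : √(i : ℝ) ^ 2 = i := Real.sq_sqrt (by positivity)
    have hBA : √(i : ℝ) ≤ √((i : ℝ) + 1) := Real.sqrt_le_sqrt (by linarith)
    push_cast
    rw [inv_le_iff_one_le_mul₀ hA]
    nlinarith [Real.sqrt_nonneg (i : ℝ)]
  calc ∑ i ∈ range n, invSqrtSucc i ≤ ∑ i ∈ range n, 2 * (√((i + 1 : ℕ) : ℝ) - √i) :=
        sum_le_sum fun i _ => hstep i
    _ = 2 * √n := by rw [← mul_sum, sum_range_sub (fun k : ℕ => √(k : ℝ))]; simp

lemma sum_range_ite_sub_succ_le {g : ℕ → ℝ} (hg : ∀ n, 0 ≤ g n) (k n : ℕ) :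
    ∑ j ∈ range n, (if k ≤ j then g j - g (j + 1) else 0) ≤ g k := by
  rw [← sum_filter, range_eq_Ico, Ico_filter_le_of_left_le (by omega), sum_Ico_eq_sum_range]
  simp_rw [add_assoc]
  rw [sum_range_sub' (fun m => g (k + m))]
  simpa using hg (k + (n - k))

noncomputable def matrixB (α : ℝ) (i j : ℕ) : ℝ :=
  if (i : ℤ) - 2 < (j : ℤ) then
    2 * ((j : ℝ) + 1 - 3 * i - 2 * α) / (((j : ℝ) + 3 + α) * ((j : ℝ) + 4 + α))
  else if (j : ℤ) = (i : ℤ) - 2 then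
    ((j : ℝ) + 1 + α) * ((j : ℝ) + 2 + α) / (((j : ℝ) + 3 + α) * ((j : ℝ) + 4 + α))
  else 0

section matrixB

variable {α : ℝ} {i j : ℕ}

lemma abs_matrixB_le_of_le (hα : -1 < α) (h : i ≤ j + 1) :
    |matrixB α i j| ≤ (8 + 4 * |α|) / (j + 1) := by
  have hi : (i : ℝ) ≤ j + 1 := by exact_mod_cast h
  have hD : ((j : ℝ) + 1) ^ 2 ≤ ((j : ℝ) + 3 + α) * ((j : ℝ) + 4 + α) := by nlinarith
  have hnum : |2 * ((j : ℝ) + 1 - 3 * i - 2 * α)| ≤ (8 + 4 * |α|) * (j + 1) := by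
    rw [abs_le]
    constructor <;> nlinarith [le_abs_self α, neg_abs_le α, abs_nonneg α]
  have hD0 : 0 < ((j : ℝ) + 3 + α) * ((j : ℝ) + 4 + α) := by nlinarith
  rw [matrixB, if_pos (by omega), abs_div, abs_of_pos hD0, div_le_div_iff₀ hD0 (by positivity)]
  calc |2 * ((j : ℝ) + 1 - 3 * i - 2 * α)| * (j + 1)
      ≤ (8 + 4 * |α|) * (j + 1) * (j + 1) := by gcongr
    _ = (8 + 4 * |α|) * (j + 1) ^ 2 := by ring
    _ ≤ (8 + 4 * |α|) * (((j : ℝ) + 3 + α) * ((j : ℝ) + 4 + α)) := by gcongr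

lemma abs_matrixB_le_one (hα : -1 < α) (h : i = j + 2) : |matrixB α i j| ≤ 1 := by
  have hj : (0 : ℝ) ≤ j := j.cast_nonneg
  have hD0 : 0 < ((j : ℝ) + 3 + α) * ((j : ℝ) + 4 + α) := by nlinarith
  rw [matrixB, if_neg (by omega), if_pos (by omega),
    abs_of_nonneg (div_nonneg (by nlinarith) hD0.le), div_le_one hD0]
  nlinarith

lemma matrixB_eq_zero (h : j + 2 < i) : matrixB α i j = 0 := by
  rw [matrixB, if_neg (by omega), if_neg (by omega)]

end matrixB

section SchurBounds

variable {α : ℝ}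

lemma sum_range_abs_matrixB_mul_le_row (hα : -1 < α) (i n : ℕ) :
    ∑ j ∈ range n, |matrixB α i j| * invSqrtSucc j ≤
      (8 * (8 + 4 * |α|) + 2) * invSqrtSucc i := by
  set K := 8 + 4 * |α|
  have hw := invSqrtSucc_pos
  have hterm (j : ℕ) : |matrixB α i j| * invSqrtSucc j ≤
      4 * K * (if i - 1 ≤ j then invSqrtSucc j - invSqrtSucc (j + 1) else 0) +
        if j = i - 2 then invSqrtSucc j else 0 := by
    have hdiag : 0 ≤ if j = i - 2 then invSqrtSucc j else 0 := by split_ifs <;> simp [(hw j).le]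
    by_cases hij : i ≤ j + 1
    · rw [if_pos (by omega)]
      calc |matrixB α i j| * invSqrtSucc j ≤ K / (j + 1) * invSqrtSucc j := by
            exact mul_le_mul_of_nonneg_right (abs_matrixB_le_of_le hα hij) (hw j).le
        _ = K * (invSqrtSucc j / (j + 1)) := by ring
        _ ≤ K * (4 * (invSqrtSucc j - invSqrtSucc (j + 1))) := by gcongr; exact invSqrtSucc_div_le j
        _ ≤ _ := by linarith
    rw [if_neg (by omega), mul_zero, zero_add]
    rcases (show i = j + 2 ∨ j + 2 < i by omega) with hsub | hlt
    · rw [if_pos (by omega)]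
      simpa using mul_le_mul_of_nonneg_right (abs_matrixB_le_one hα hsub) (hw j).le
    · simpa [matrixB_eq_zero hlt] using hdiag
  calc ∑ j ∈ range n, |matrixB α i j| * invSqrtSucc j
      ≤ 4 * K * ∑ j ∈ range n, (if i - 1 ≤ j then invSqrtSucc j - invSqrtSucc (j + 1) else 0) +
          ∑ j ∈ range n, (if j = i - 2 then invSqrtSucc j else 0) := by
        rw [mul_sum, ← sum_add_distrib]; exact sum_le_sum fun j _ => hterm j
    _ ≤ 4 * K * invSqrtSucc (i - 1) + invSqrtSucc (i - 2) := by
        gcongr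
        · exact sum_range_ite_sub_succ_le (fun m => (hw m).le) _ _
        · rw [sum_ite_eq']; split_ifs <;> linarith [hw (i - 2)]
    _ ≤ 4 * K * (2 * invSqrtSucc i) + 2 * invSqrtSucc i := by
        gcongr <;> exact invSqrtSucc_le_two_mul (by omega)
    _ = (8 * K + 2) * invSqrtSucc i := by ring

lemma sum_range_abs_matrixB_mul_le_col (hα : -1 < α) (j n : ℕ) :
    ∑ i ∈ range n, |matrixB α i j| * invSqrtSucc i ≤
      (8 * (8 + 4 * |α|) + 2) * invSqrtSucc j := by
  set K := 8 + 4 * |α|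
  have hw := invSqrtSucc_pos
  have hterm (i : ℕ) : |matrixB α i j| * invSqrtSucc i ≤
      (if i < j + 2 then K / (j + 1) * invSqrtSucc i else 0) +
        if i = j + 2 then invSqrtSucc i else 0 := by
    by_cases hij : i ≤ j + 1
    · rw [if_pos (by omega), if_neg (by omega), add_zero]
      exact mul_le_mul_of_nonneg_right (abs_matrixB_le_of_le hα hij) (hw i).le
    rw [if_neg (by omega), zero_add]
    rcases (show i = j + 2 ∨ j + 2 < i by omega) with hsub | hlt
    · rw [if_pos hsub]
      simpa using mul_le_mul_of_nonneg_right (abs_matrixB_le_one hα hsub) (hw i).le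
    · rw [matrixB_eq_zero hlt, if_neg (by omega)]
      simp
  have hsqrt : √((j : ℝ) + 2) ≤ 2 * ((j + 1) * invSqrtSucc j) := by
    rw [invSqrtSucc, ← div_eq_mul_inv, Real.div_sqrt]
    calc √((j : ℝ) + 2) ≤ √(2 ^ 2 * ((j : ℝ) + 1)) := Real.sqrt_le_sqrt (by linarith)
      _ = 2 * √((j : ℝ) + 1) := by rw [Real.sqrt_mul (by norm_num), Real.sqrt_sq (by norm_num)]
  calc ∑ i ∈ range n, |matrixB α i j| * invSqrtSucc i
      ≤ ∑ i ∈ range n, (if i < j + 2 then K / (j + 1) * invSqrtSucc i else 0) +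
          ∑ i ∈ range n, (if i = j + 2 then invSqrtSucc i else 0) := by
        rw [← sum_add_distrib]; exact sum_le_sum fun i _ => hterm i
    _ ≤ ∑ i ∈ range (j + 2), K / (j + 1) * invSqrtSucc i + invSqrtSucc (j + 2) := by
        gcongr
        · rw [← sum_filter]
          exact sum_le_sum_of_subset_of_nonneg (fun i => by simp) fun i _ _ => by
            have := hw i; positivity
        · rw [sum_ite_eq']; split_ifs <;> linarith [hw (j + 2)]
    _ ≤ K / (j + 1) * (2 * √((j : ℝ) + 2)) + invSqrtSucc j := by
        rw [← mul_sum]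
        gcongr
        · exact_mod_cast sum_range_invSqrtSucc_le (j + 2)
        · exact invSqrtSucc_antitone (by omega)
    _ ≤ K / (j + 1) * (2 * (2 * ((j + 1) * invSqrtSucc j))) + invSqrtSucc j := by gcongr
    _ ≤ (8 * K + 2) * invSqrtSucc j := by
        field_simp
        have hK : 0 ≤ K := by positivity
        nlinarith [hw j]

end SchurBounds

lemma ENNReal.tsum_ofReal_le_of_sum_range_le {f : ℕ → ℝ} (hf : ∀ n, 0 ≤ f n) {c : ℝ}
    (h : ∀ n, ∑ i ∈ range n, f i ≤ c) : ∑' n, ENNReal.ofReal (f n) ≤ ENNReal.ofReal c := by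
  rw [← ENNReal.ofReal_tsum_of_nonneg hf (summable_of_sum_range_le hf h)]
  exact ENNReal.ofReal_le_ofReal (Real.tsum_le_of_sum_range_le hf h)

lemma Complex.enorm_ofReal_mul_coe_toNNReal (r s : ℝ) :
    ‖(r : ℂ)‖ₑ * (s.toNNReal : ℝ≥0∞) = ENNReal.ofReal (|r| * s) := by
  rw [← ofReal_norm, Complex.norm_real, Real.norm_eq_abs, ENNReal.ofReal_mul (abs_nonneg r)]
  rfl

/-- For every `α > -1` there is a bounded operator `B` on
`ℓ²` with matrix entries `⟨B e_j, e_i⟩ = 2(j+1−3i−2α)/((j+3+α)(j+4+α))` if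
`j > i − 2`, `(j+1+α)(j+2+α)/((j+3+α)(j+4+α))` if `j = i − 2`, and `0` if
`j < i − 2`. -/
theorem exists_left_inverse_matrix_B (α : ℝ) (hα : α > -1) :
    ∃ B : lp (fun _ : ℕ => ℂ) 2 →L[ℂ] lp (fun _ : ℕ => ℂ) 2,
      ∀ i j : ℕ, (inner ℂ (e i) (B (e j)) : ℂ) =
        if (i : ℤ) - 2 < (j : ℤ) then
          ((2 * ((j : ℝ) + 1 - 3 * i - 2 * α) /
            (((j : ℝ) + 3 + α) * ((j : ℝ) + 4 + α)) : ℝ) : ℂ)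
        else if (j : ℤ) = (i : ℤ) - 2 then
          (((((j : ℝ) + 1 + α) * ((j : ℝ) + 2 + α)) /
            ((((j : ℝ) + 3 + α)) * (((j : ℝ) + 4 + α))) : ℝ) : ℂ)
        else 0 := by
  set C : ℝ := 8 * (8 + 4 * |α|) + 2
  have hC (x : ℝ) : (C.toNNReal * x.toNNReal : ℝ≥0∞) = ENNReal.ofReal (C * x) :=
    (ENNReal.ofReal_mul (by positivity)).symm
  have hw (n : ℕ) : 0 ≤ invSqrtSucc n := (invSqrtSucc_pos n).le
  obtain ⟨B, hB⟩ := exists_clm_apply_eq_tsum_of_schur (fun i j => (matrixB α i j : ℂ))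
    (w := fun n => (invSqrtSucc n).toNNReal) (C := C.toNNReal)
    (fun n => Real.toNNReal_pos.2 (invSqrtSucc_pos n))
    (fun i => by
      simpa only [Complex.enorm_ofReal_mul_coe_toNNReal, hC] using
        ENNReal.tsum_ofReal_le_of_sum_range_le (fun j => mul_nonneg (abs_nonneg _) (hw j))
          (sum_range_abs_matrixB_mul_le_row hα i))
    (fun j => by
      simpa only [Complex.enorm_ofReal_mul_coe_toNNReal, hC] using
        ENNReal.tsum_ofReal_le_of_sum_range_le (fun i => mul_nonneg (abs_nonneg _) (hw i))
          (sum_range_abs_matrixB_mul_le_col hα j))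
  refine ⟨B, fun i j => ?_⟩
  have hentry : inner ℂ (e i) (B (e j)) = (matrixB α i j : ℂ) := by
    simp only [e, lp.inner_single_left, RCLike.inner_apply, map_one, mul_one, hB, lp.single_apply,
      Pi.single_apply, mul_ite, mul_zero, tsum_ite_eq]
  rw [hentry, matrixB]
  split_ifs <;> rfl
end

section
/- Let α > −1 be a real number, let M = (C^(α),2) be the generalized Cesàro operator of order two on ℓ², and let B be the bounded operator on ℓ² with matrix entries b_{ij} = 2(j+1−3i−2α)/((j+3+α)(j+4+α)) if j > i−2, b_{ij} = (j+1+α)(j+2+α)/((j+3+α)(j+4+α)) if j = i−2, and b_{ij} = 0 if j < i−2. Then B M = M*. -/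
open ContinuousLinearMap

/-!
Both operators are determined by their matrix entries, and the `(i, j)` entry of `B M` is the
series `∑ₖ b_{ik} m_{kj}`. For `k ≥ max j (i - 1)` its terms telescope,
`b_{ik} m_{kj} = F(k) - F(k + 1)`, with the rational function `F = primitive α i j` of
degree `-1`; the terms are eventually nonnegative, so the series converges to
`(∑_{k < s} b_{ik} m_{kj}) + F(s)` at the start `s` of the telescoping range. If `i ≤ j + 1`
this is `F(j) = m_{ji}`; otherwise the only earlier nonzero term, at `k = i - 2`, cancels
`F(i - 1)`, matching `m_{ji} = 0`. Either way we get the `(i, j)` entry of `M*`.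
-/

namespace lp

variable {ι 𝕜 : Type*} [RCLike 𝕜] [DecidableEq ι]

theorem inner_single_one_left (i : ι) (x : ℓ²(ι, 𝕜)) :
    inner 𝕜 (lp.single 2 i (1 : 𝕜)) x = x i := by
  simp [lp.inner_single_left]

theorem hasSum_inner_single_mul (A : ℓ²(ι, 𝕜) →L[𝕜] ℓ²(ι, 𝕜)) (i : ι) (x : ℓ²(ι, 𝕜)) :
    HasSum (fun k => inner 𝕜 (lp.single 2 i (1 : 𝕜)) (A (lp.single 2 k 1)) * x k)
      (inner 𝕜 (lp.single 2 i (1 : 𝕜)) (A x)) := by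
  refine ((lp.hasSum_single ENNReal.ofNat_ne_top x).mapL
    ((innerSL 𝕜 (lp.single 2 i (1 : 𝕜))).comp A)).congr_fun fun k => ?_
  have hsingle : lp.single (E := fun _ : ι => 𝕜) 2 k (x k) = x k • lp.single 2 k (1 : 𝕜) := by
    rw [← lp.single_smul, smul_eq_mul, mul_one]
  rw [hsingle, map_smul, coe_comp, Function.comp_apply, innerSL_apply_apply, smul_eq_mul,
    mul_comm]

theorem hasSum_inner_single_comp (A B : ℓ²(ι, 𝕜) →L[𝕜] ℓ²(ι, 𝕜)) (i j : ι) :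
    HasSum (fun k => inner 𝕜 (lp.single 2 i (1 : 𝕜)) (A (lp.single 2 k 1)) *
        inner 𝕜 (lp.single 2 k (1 : 𝕜)) (B (lp.single 2 j 1)))
      (inner 𝕜 (lp.single 2 i (1 : 𝕜)) ((A ∘L B) (lp.single 2 j 1))) := by
  simpa only [inner_single_one_left, coe_comp, Function.comp_apply]
    using hasSum_inner_single_mul A i (B (lp.single 2 j 1))

theorem ext_inner_single {A B : ℓ²(ι, 𝕜) →L[𝕜] ℓ²(ι, 𝕜)}
    (h : ∀ i j, inner 𝕜 (lp.single 2 i (1 : 𝕜)) (A (lp.single 2 j 1)) =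
      inner 𝕜 (lp.single 2 i (1 : 𝕜)) (B (lp.single 2 j 1))) : A = B := by
  ext x i
  rw [← inner_single_one_left, ← inner_single_one_left]
  exact (hasSum_inner_single_mul A i x).unique
    (by simpa only [h] using hasSum_inner_single_mul B i x)

end lp

open Finset Filter Topology

theorem hasSum_of_tendsto_of_eventually_nonneg {f : ℕ → ℝ} {a : ℝ}
    (hnn : ∀ᶠ n in atTop, 0 ≤ f n) (h : Tendsto (fun n => ∑ i ∈ range n, f i) atTop (𝓝 a)) :
    HasSum f a := by
  obtain ⟨N, hN⟩ := eventually_atTop.1 hnn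
  refine (hasSum_nat_add_iff' N).1 ?_
  rw [hasSum_iff_tendsto_nat_of_nonneg fun n => hN _ (Nat.le_add_left N n)]
  refine ((h.comp (tendsto_add_atTop_nat N)).sub_const _).congr fun n => ?_
  rw [Function.comp_apply, add_comm, sum_range_add, add_sub_cancel_left]
  simp only [add_comm]

theorem hasSum_of_eq_sub_succ {f F : ℕ → ℝ} {s : ℕ} (hf : ∀ n ≥ s, f n = F n - F (n + 1))
    (hF : Tendsto F atTop (𝓝 0)) (hnn : ∀ᶠ n in atTop, 0 ≤ f n) :
    HasSum f (∑ i ∈ range s, f i + F s) := by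
  refine hasSum_of_tendsto_of_eventually_nonneg hnn ?_
  have hsum : ∀ n ≥ s, ∑ i ∈ range n, f i = ∑ i ∈ range s, f i + F s - F n := by
    intro n hn
    induction n, hn using Nat.le_induction with
    | base => ring
    | succ n hn ih => rw [sum_range_succ, ih, hf n hn]; ring
  simpa using (hF.const_sub (∑ i ∈ range s, f i + F s)).congr'
    ((eventually_ge_atTop s).mono fun n hn => (hsum n hn).symm)

namespace CesaroTwo

noncomputable def mEntry (α : ℝ) (i j : ℕ) : ℝ :=
  if j ≤ i then 2 * ((i : ℝ) + 1 - j) / (((i : ℝ) + 1 + α) * ((i : ℝ) + 2 + α)) else 0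

noncomputable def bEntry (α : ℝ) (i j : ℕ) : ℝ :=
  if (i : ℤ) - 2 < (j : ℤ) then
    2 * ((j : ℝ) + 1 - 3 * i - 2 * α) / (((j : ℝ) + 3 + α) * ((j : ℝ) + 4 + α))
  else if (j : ℤ) = (i : ℤ) - 2 then
    ((j : ℝ) + 1 + α) * ((j : ℝ) + 2 + α) / (((j : ℝ) + 3 + α) * ((j : ℝ) + 4 + α))
  else 0

noncomputable def primitive (α : ℝ) (i j : ℕ) (x : ℝ) : ℝ :=
  (4 * x ^ 2 + (10 - 6 * (i : ℝ) - 2 * (j : ℝ)) * x +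
      (6 - 2 * (j : ℝ) - 6 * (i : ℝ) + 4 * (i : ℝ) * (j : ℝ) + 2 * α + 2 * α * (j : ℝ)
        - 2 * α * (i : ℝ))) /
    ((x + 1 + α) * (x + 2 + α) * (x + 3 + α))

variable {α : ℝ}

theorem natCast_add_add_pos (hα : -1 < α) (k : ℕ) {c : ℝ} (hc : 1 ≤ c) : 0 < (k : ℝ) + c + α := by
  linarith [(k.cast_nonneg : (0 : ℝ) ≤ k)]

theorem bEntry_mul_mEntry_eq_primitive_sub (hα : -1 < α) {i j k : ℕ} (hjk : j ≤ k)
    (hik : i ≤ k + 1) :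
    bEntry α i k * mEntry α k j = primitive α i j k - primitive α i j (k + 1 : ℕ) := by
  have h1 := natCast_add_add_pos hα k le_rfl
  have h2 := natCast_add_add_pos hα k one_le_two
  have h3 := natCast_add_add_pos hα k (by norm_num : (1 : ℝ) ≤ 3)
  have h4 := natCast_add_add_pos hα k (by norm_num : (1 : ℝ) ≤ 4)
  rw [bEntry, mEntry, if_pos (by omega), if_pos hjk, primitive, primitive]
  push_cast
  have h2' : (k : ℝ) + 1 + 1 + α ≠ 0 := by linarith
  have h3' : (k : ℝ) + 1 + 2 + α ≠ 0 := by linarith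
  have h4' : (k : ℝ) + 1 + 3 + α ≠ 0 := by linarith
  field_simp
  ring

theorem tendsto_primitive (i j : ℕ) : Tendsto (primitive α i j) atTop (𝓝 0) := by
  open Polynomial in
  let P : ℝ[X] := C 4 * X ^ 2 + C (10 - 6 * (i : ℝ) - 2 * j) * X +
    C (6 - 2 * (j : ℝ) - 6 * i + 4 * i * j + 2 * α + 2 * α * j - 2 * α * i)
  let Q : ℝ[X] := (X + C (1 + α)) * (X + C (2 + α)) * (X + C (3 + α))
  have hQ : Q.degree = 3 := by simp only [Q]; compute_degree!
  have hP : P.degree ≤ 2 := by simp only [P]; compute_degree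
  have hPQ : P.degree < Q.degree := hQ ▸ hP.trans_lt (by norm_num)
  convert div_tendsto_atTop_zero_of_degree_lt P Q hPQ using 2 with x
  simp only [P, Q, primitive, eval_add, eval_mul, eval_pow, eval_C, eval_X]
  ring

theorem eventually_nonneg_bEntry_mul_mEntry (hα : -1 < α) (i j : ℕ) :
    ∀ᶠ k in atTop, 0 ≤ bEntry α i k * mEntry α k j := by
  filter_upwards [eventually_ge_atTop (i + j),
    tendsto_natCast_atTop_atTop.eventually_ge_atTop (3 * (i : ℝ) + 2 * α)] with k hk hk'
  have hjk : (j : ℝ) ≤ k := by exact_mod_cast (show j ≤ k by omega)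
  rw [bEntry, mEntry, if_pos (by omega), if_pos (by omega)]
  have h1 := natCast_add_add_pos hα k le_rfl
  have h2 := natCast_add_add_pos hα k one_le_two
  have h3 := natCast_add_add_pos hα k (by norm_num : (1 : ℝ) ≤ 3)
  have h4 := natCast_add_add_pos hα k (by norm_num : (1 : ℝ) ≤ 4)
  apply mul_nonneg <;> apply div_nonneg <;> nlinarith

theorem primitive_natCast_of_le (hα : -1 < α) {i j : ℕ} (hij : i ≤ j + 1) :
    primitive α i j j = mEntry α j i := by
  have h1 := natCast_add_add_pos hα j le_rfl
  have h2 := natCast_add_add_pos hα j one_le_two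
  have h3 := natCast_add_add_pos hα j (by norm_num : (1 : ℝ) ≤ 3)
  rw [primitive, mEntry]
  split_ifs with hij'
  · field_simp
    ring
  · obtain rfl : i = j + 1 := by omega
    field_simp
    push_cast
    ring

theorem bEntry_mul_mEntry_add_primitive (hα : -1 < α) {n j : ℕ} (hjn : j ≤ n) :
    bEntry α (n + 2) n * mEntry α n j + primitive α (n + 2) j (n + 1 : ℕ) = 0 := by
  have h1 := natCast_add_add_pos hα n le_rfl
  have h2 := natCast_add_add_pos hα n one_le_two
  have h3 := natCast_add_add_pos hα n (by norm_num : (1 : ℝ) ≤ 3)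
  have h4 := natCast_add_add_pos hα n (by norm_num : (1 : ℝ) ≤ 4)
  rw [bEntry, mEntry, if_neg (by omega), if_pos (by omega), if_pos hjn, primitive]
  push_cast
  have h2' : (n : ℝ) + 1 + 1 + α ≠ 0 := by linarith
  have h3' : (n : ℝ) + 1 + 2 + α ≠ 0 := by linarith
  have h4' : (n : ℝ) + 1 + 3 + α ≠ 0 := by linarith
  field_simp
  ring

theorem hasSum_bEntry_mul_mEntry (hα : -1 < α) (i j : ℕ) :
    HasSum (fun k => bEntry α i k * mEntry α k j) (mEntry α j i) := by
  have telescoping (s : ℕ) (hs : ∀ k ≥ s, j ≤ k ∧ i ≤ k + 1) :=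
    hasSum_of_eq_sub_succ (F := fun k : ℕ => primitive α i j k)
      (fun k hk => bEntry_mul_mEntry_eq_primitive_sub hα (hs k hk).1 (hs k hk).2)
      ((tendsto_primitive i j).comp tendsto_natCast_atTop_atTop)
      (eventually_nonneg_bEntry_mul_mEntry hα i j)
  rcases le_or_gt i (j + 1) with hij | hij
  · convert telescoping j fun k hk => ⟨hk, by omega⟩ using 1
    have hlow : ∀ k ∈ range j, bEntry α i k * mEntry α k j = 0 := fun k hk => by
      rw [mEntry, if_neg (by simpa using hk), mul_zero]
    rw [sum_eq_zero hlow, zero_add, primitive_natCast_of_le hα hij]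
  · obtain ⟨n, rfl⟩ : ∃ n, i = n + 2 := ⟨i - 2, by omega⟩
    convert telescoping (n + 1) fun k hk => ⟨by omega, by omega⟩ using 1
    have hlow : ∀ k ∈ range n, bEntry α (n + 2) k * mEntry α k j = 0 := fun k hk => by
      have hk : k < n := by simpa using hk
      rw [bEntry, if_neg (by omega), if_neg (by omega), zero_mul]
    rw [mEntry, if_neg (by omega), sum_range_succ, sum_eq_zero hlow, zero_add,
      bEntry_mul_mEntry_add_primitive hα (by omega)]

end CesaroTwo

/-- With `M` the generalized Cesàro operator of order two and
`B` the operator with the stated matrix entries, `B M = M*`. -/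
theorem B_mul_M_eq_adjoint_M (α : ℝ) (hα : α > -1)
    (M B : lp (fun _ : ℕ => ℂ) 2 →L[ℂ] lp (fun _ : ℕ => ℂ) 2)
    (hM : ∀ i j : ℕ, (inner ℂ (e i) (M (e j)) : ℂ) =
      if j ≤ i then
        ((2 * ((i : ℝ) + 1 - j) / (((i : ℝ) + 1 + α) * ((i : ℝ) + 2 + α)) : ℝ) : ℂ)
      else 0)
    (hB : ∀ i j : ℕ, (inner ℂ (e i) (B (e j)) : ℂ) =
      if (i : ℤ) - 2 < (j : ℤ) then
        ((2 * ((j : ℝ) + 1 - 3 * i - 2 * α) /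
          (((j : ℝ) + 3 + α) * ((j : ℝ) + 4 + α)) : ℝ) : ℂ)
      else if (j : ℤ) = (i : ℤ) - 2 then
        (((((j : ℝ) + 1 + α) * ((j : ℝ) + 2 + α)) /
          ((((j : ℝ) + 3 + α)) * (((j : ℝ) + 4 + α))) : ℝ) : ℂ)
      else 0) :
    B ∘L M = adjoint M := by
  have hMentry (i j : ℕ) : inner ℂ (e i) (M (e j)) = (CesaroTwo.mEntry α i j : ℂ) := by
    rw [hM, CesaroTwo.mEntry]; split_ifs <;> simp
  have hBentry (i j : ℕ) : inner ℂ (e i) (B (e j)) = (CesaroTwo.bEntry α i j : ℂ) := by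
    rw [hB, CesaroTwo.bEntry]; split_ifs <;> simp
  refine lp.ext_inner_single fun i j => ?_
  have hprod : HasSum (fun k => inner ℂ (e i) (B (e k)) * inner ℂ (e k) (M (e j)))
      (inner ℂ (e i) ((B ∘L M) (e j))) := lp.hasSum_inner_single_comp B M i j
  simp only [hMentry, hBentry] at hprod
  have hreal := Complex.hasSum_ofReal.2 (CesaroTwo.hasSum_bEntry_mul_mEntry hα i j)
  push_cast at hreal
  change inner ℂ (e i) ((B ∘L M) (e j)) = inner ℂ (e i) (adjoint M (e j))
  rw [hprod.unique hreal, adjoint_inner_right, ← inner_conj_symm, hMentry, Complex.conj_ofReal]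
end
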